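/- arXiv:2509.08692 — 10 statements merged into one kernel-verified Lean document; each statement's English description precedes it below -/
import Mathlib

section
/- For every ε > 0 there exists k₀ such that for all integers k ≥ k₀ there exists an oriented linear k-graph with Property O having at most (1+ε)·4k⁶(ln k)²·(k!)² edges; that is, f'(k) ≤ (1+o(1))·4k⁶ ln²k·(k!)². -/
/-!
Take as vertices the points `(i, y)` of `Fin k × 𝔽_q` and as edges the `q²` lines `y = a + b i`,
each read as a `k`-tuple after permuting its points by an orientation `τ L`. Two lines share at most
one point, so the hypergraph is linear. As far as the edges can tell, a linear order on the `kq`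
vertices is a rank function `V → Fin (kq)`; there are at most `(kq)^(kq)` of them, and for a fixed
one a uniformly random orientation makes no line increasing with probability `(1 - 1/k!)^(q²)`.
For a prime `q ∈ (2k³k!, 4k³k!]` the union bound `(kq)^(kq) (1 - 1/k!)^(q²) < 1` holds, so some
orientation works for every order, with `q² ≤ 16 k⁶ (k!)² ≤ 4 k⁶ (ln k)² (k!)²` edges once
`ln k ≥ 2`.
-/

open Finset Function
open scoped Nat

theorem exists_forall_exists_apply_eq_of_card_lt {ι α β : Type*} [Fintype ι] [DecidableEq ι]
    [Fintype α] [DecidableEq α] [Fintype β] (t : β → ι → α)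
    (h : Fintype.card β * (Fintype.card α - 1) ^ Fintype.card ι <
      Fintype.card α ^ Fintype.card ι) :
    ∃ τ : ι → α, ∀ b, ∃ i, τ i = t b i := by
  by_contra! hτ
  have hcover : (univ : Finset (ι → α)) ⊆
      univ.biUnion fun b => Fintype.piFinset fun i => univ.erase (t b i) := fun τ _ => by
    obtain ⟨b, hb⟩ := hτ τ
    simpa [Fintype.mem_piFinset] using ⟨b, hb⟩
  have hcard := (card_le_card hcover).trans card_biUnion_le
  simp only [card_univ, Fintype.card_pi, Fintype.card_piFinset, card_erase_of_mem (mem_univ _),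
    prod_const, sum_const, smul_eq_mul] at hcard
  exact hcard.not_gt h

theorem exists_fin_lt_iff_lt {α β : Type*} [Fintype α] [LinearOrder β] (σ : α → β) :
    ∃ ρ : α → Fin (Fintype.card α), ∀ x y, ρ x < ρ y ↔ σ x < σ y := by
  classical
  refine ⟨fun x => ⟨#{y | σ y < σ x}, card_lt_univ_of_notMem (x := x) (by simp)⟩, fun x y => ?_⟩
  rw [Fin.mk_lt_mk]
  constructor
  · contrapose!
    exact fun hyx => card_le_card (monotone_filter_right _ fun z _ hz => hz.trans_le hyx)
  · refine fun hxy => card_lt_card ⟨monotone_filter_right _ fun z _ hz => hz.trans hxy, ?_⟩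
    exact fun hsub => lt_irrefl _ (mem_filter.1 (hsub (mem_filter.2 ⟨mem_univ x, hxy⟩))).2

theorem Tuple.strictMono_comp_sort {n : ℕ} {β : Type*} [LinearOrder β] {f : Fin n → β}
    (hf : Injective f) : StrictMono (f ∘ Tuple.sort f) :=
  (Tuple.monotone_sort f).strictMono_of_injective (hf.comp (Tuple.sort f).injective)

theorem Real.exp_inv_mul_sub_one_lt {a : ℝ} (ha : 0 < a) : Real.exp a⁻¹ * (a - 1) < a :=
  calc Real.exp a⁻¹ * (a - 1) = Real.exp a⁻¹ * (a * (1 - a⁻¹)) := by field_simp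
    _ < Real.exp a⁻¹ * (a * Real.exp (-a⁻¹)) := by
        gcongr; exact Real.one_sub_lt_exp_neg (inv_ne_zero ha.ne')
    _ = a := by rw [mul_left_comm, ← Real.exp_add, add_neg_cancel, Real.exp_zero, mul_one]

theorem pow_self_mul_sub_one_pow_lt {m Q a : ℕ} (ha : 0 < a)
    (h : m * Real.log m * a < Q) : m ^ m * (a - 1) ^ Q < a ^ Q := by
  have haR : (0 : ℝ) < a := by exact_mod_cast ha
  have hQ : 0 < Q := by exact_mod_cast (by positivity : (0 : ℝ) ≤ _).trans_lt h
  have hm : (m : ℝ) ^ m ≤ Real.exp (Q * (a : ℝ)⁻¹) := by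
    rcases m.eq_zero_or_pos with rfl | hm
    · simp only [pow_zero, Nat.cast_zero]; exact Real.one_le_exp (by positivity)
    rw [← Real.exp_log (by positivity : (0 : ℝ) < m ^ m), Real.log_pow, ← div_eq_mul_inv]
    gcongr
    rw [le_div_iff₀ haR]
    exact h.le
  rw [← Nat.cast_lt (α := ℝ)]
  push_cast [Nat.cast_sub ha]
  have ha1 : (0 : ℝ) ≤ a - 1 := sub_nonneg.2 (by exact_mod_cast ha)
  calc (m : ℝ) ^ m * (a - 1) ^ Q ≤ Real.exp (Q * (a : ℝ)⁻¹) * (a - 1) ^ Q := by gcongr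
    _ = (Real.exp (a : ℝ)⁻¹ * (a - 1)) ^ Q := by rw [Real.exp_nat_mul, mul_pow]
    _ < a ^ Q := pow_lt_pow_left₀ (Real.exp_inv_mul_sub_one_lt haR) (by positivity) hQ.ne'

theorem log_mul_lt_two_mul_sq {k q : ℕ} (hk : 4 ≤ k) (hq0 : 0 < q) (hq : q ≤ 4 * k ^ 3 * k !) :
    Real.log (k * q) < 2 * k ^ 2 := by
  have hkq : k * q ≤ k ^ (k + 5) :=
    calc k * q ≤ k * (4 * k ^ 3 * k !) := by gcongr
      _ ≤ k * (k * k ^ 3 * k ^ k) := by gcongr; exact Nat.factorial_le_pow k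
      _ = k ^ (k + 5) := by ring
  have hkR : (4 : ℝ) ≤ k := by exact_mod_cast hk
  calc Real.log (k * q) ≤ Real.log (k ^ (k + 5) : ℕ) := by
        rw [← Nat.cast_mul]; gcongr
    _ = (k + 5) * Real.log k := by push_cast; rw [Real.log_pow]; push_cast; ring
    _ ≤ (k + 5) * (k - 1) := by gcongr; exact Real.log_le_sub_one_of_pos (by positivity)
    _ < 2 * k ^ 2 := by nlinarith

theorem pow_mul_factorial_sub_one_pow_lt {k q : ℕ} (hk : 4 ≤ k) (hq₁ : 2 * k ^ 3 * k ! < q)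
    (hq₂ : q ≤ 4 * k ^ 3 * k !) : (k * q) ^ (k * q) * ((k !) - 1) ^ (q * q) < k ! ^ (q * q) := by
  apply pow_self_mul_sub_one_pow_lt (Nat.factorial_pos k)
  have hq₁R : 2 * (k : ℝ) ^ 3 * k ! < q := by exact_mod_cast hq₁
  have hq0 : 0 < q := by omega
  have hlog := log_mul_lt_two_mul_sq hk hq0 hq₂
  push_cast
  calc (k * q : ℝ) * Real.log (k * q) * k ! = (k * q * k !) * Real.log (k * q) := by ring
    _ < (k * q * k !) * (2 * k ^ 2) := by gcongr
    _ = q * (2 * k ^ 3 * k !) := by ring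
    _ < q * q := by gcongr

theorem Real.two_le_log_of_eight_le {x : ℝ} (hx : 8 ≤ x) : 2 ≤ Real.log x := by
  rw [Real.le_log_iff_exp_le (by positivity)]
  calc Real.exp 2 = Real.exp 1 ^ 2 := by rw [← Real.exp_nat_mul]; norm_num
    _ ≤ 2.7182818286 ^ 2 := by gcongr; exact Real.exp_one_lt_d9.le
    _ ≤ x := by linarith

structure IsOrientedLinearWithPropertyO {k : ℕ} {V : Type*} (E : Finset (Fin k → V)) : Prop where
  injective : ∀ e ∈ E, Injective e
  eq_of_range_eq : ∀ e ∈ E, ∀ f ∈ E, Set.range e = Set.range f → e = f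
  linear : ∀ e ∈ E, ∀ f ∈ E, e ≠ f → (Set.range e ∩ Set.range f).Subsingleton
  propertyO : ∀ σ : V → ℕ, Injective σ → ∃ e ∈ E, ∀ i j : Fin k, i < j → σ (e i) < σ (e j)

theorem IsOrientedLinearWithPropertyO.image_equiv {k : ℕ} {V W : Type*} [DecidableEq W]
    {E : Finset (Fin k → V)} (hE : IsOrientedLinearWithPropertyO E) (ψ : V ≃ W) :
    IsOrientedLinearWithPropertyO (E.image (ψ ∘ ·)) where
  injective := forall_mem_image.2 fun e he => ψ.injective.comp (hE.injective e he)
  eq_of_range_eq := forall_mem_image.2 fun e he => forall_mem_image.2 fun f hf h => by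
    rw [Set.range_comp, Set.range_comp, (Set.image_injective.2 ψ.injective).eq_iff] at h
    rw [hE.eq_of_range_eq e he f hf h]
  linear := forall_mem_image.2 fun e he => forall_mem_image.2 fun f hf hne => by
    rw [Set.range_comp, Set.range_comp, ← Set.image_inter ψ.injective]
    exact (hE.linear e he f hf fun h => hne (h ▸ rfl)).image ψ
  propertyO σ hσ := by
    obtain ⟨e, he, hincr⟩ := hE.propertyO (σ ∘ ψ) (hσ.comp ψ.injective)
    exact ⟨ψ ∘ e, mem_image_of_mem _ he, hincr⟩

section Lines

variable (k q : ℕ)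

def linePoint (L : ZMod q × ZMod q) (i : Fin k) : Fin k × ZMod q :=
  (i, L.1 + L.2 * (i : ℕ))

theorem linePoint_injective (L : ZMod q × ZMod q) : Injective (linePoint k q L) :=
  fun _ _ h => congrArg Prod.fst h

variable {k q}

theorem eq_of_mem_range_linePoint [Fact q.Prime] (hkq : k ≤ q) {L L' : ZMod q × ZMod q}
    {x y : Fin k × ZMod q} (hxy : x ≠ y)
    (hx : x ∈ Set.range (linePoint k q L) ∩ Set.range (linePoint k q L'))
    (hy : y ∈ Set.range (linePoint k q L) ∩ Set.range (linePoint k q L')) : L = L' := by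
  obtain ⟨⟨i, rfl⟩, ⟨i', hi⟩⟩ := hx
  obtain ⟨⟨j, rfl⟩, ⟨j', hj⟩⟩ := hy
  obtain rfl : i = i' := (congrArg Prod.fst hi).symm
  obtain rfl : j = j' := (congrArg Prod.fst hj).symm
  have hij : ((i : ℕ) : ZMod q) - (j : ℕ) ≠ 0 := by
    refine sub_ne_zero.2 fun h => hxy ?_
    rw [ZMod.natCast_eq_natCast_iff', Nat.mod_eq_of_lt (by omega),
      Nat.mod_eq_of_lt (by omega)] at h
    rw [Fin.ext h]
  have hi := congrArg Prod.snd hi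
  have hj := congrArg Prod.snd hj
  simp only [linePoint] at hi hj
  have hb : L.2 = L'.2 := mul_right_cancel₀ hij (by linear_combination hj - hi)
  exact Prod.ext (by linear_combination -hi - ((i : ℕ) : ZMod q) * hb) hb

variable (k q)

def lineHypergraph [NeZero q] (τ : ZMod q × ZMod q → Equiv.Perm (Fin k)) :
    Finset (Fin k → Fin k × ZMod q) :=
  univ.image fun L => linePoint k q L ∘ τ L

variable {k q}

theorem range_linePoint_comp (L : ZMod q × ZMod q) (π : Equiv.Perm (Fin k)) :
    Set.range (linePoint k q L ∘ π) = Set.range (linePoint k q L) :=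
  π.surjective.range_comp _

theorem isOrientedLinearWithPropertyO_lineHypergraph [Fact q.Prime] (hk : 2 ≤ k) (hkq : k ≤ q)
    {τ : ZMod q × ZMod q → Equiv.Perm (Fin k)}
    (hτ : ∀ g : Fin k × ZMod q → Fin (Fintype.card (Fin k × ZMod q)),
      ∃ L, τ L = Tuple.sort (g ∘ linePoint k q L)) :
    IsOrientedLinearWithPropertyO (lineHypergraph k q τ) where
  injective := forall_mem_image.2 fun L _ => (linePoint_injective k q L).comp (τ L).injective
  eq_of_range_eq := forall_mem_image.2 fun L _ => forall_mem_image.2 fun L' _ h => by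
    rw [range_linePoint_comp, range_linePoint_comp] at h
    have hmem (i : Fin k) : linePoint k q L i ∈ Set.range (linePoint k q L) ∩
        Set.range (linePoint k q L') := ⟨⟨i, rfl⟩, h ▸ ⟨i, rfl⟩⟩
    have h01 : linePoint k q L ⟨0, by omega⟩ ≠ linePoint k q L ⟨1, by omega⟩ :=
      (linePoint_injective k q L).ne (by simp [Fin.ext_iff])
    rw [eq_of_mem_range_linePoint hkq h01 (hmem _) (hmem _)]
  linear := forall_mem_image.2 fun L _ => forall_mem_image.2 fun L' _ hne x hx y hy => by
    rw [range_linePoint_comp, range_linePoint_comp] at hx hy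
    by_contra hxy
    exact hne (by rw [eq_of_mem_range_linePoint hkq hxy hx hy])
  propertyO σ hσ := by
    obtain ⟨ρ, hρ⟩ := exists_fin_lt_iff_lt σ
    have hρ_inj : Injective ρ := fun x y h => hσ <| le_antisymm
      (not_lt.1 fun hyx => ((hρ y x).2 hyx).ne' h) (not_lt.1 fun hxy => ((hρ x y).2 hxy).ne h)
    obtain ⟨L, hL⟩ := hτ ρ
    refine ⟨_, mem_image_of_mem _ (mem_univ L), fun i j hij => ?_⟩
    have hsorted := Tuple.strictMono_comp_sort (hρ_inj.comp (linePoint_injective k q L)) hij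
    rw [← hL] at hsorted
    exact (hρ _ _).1 hsorted

theorem exists_isOrientedLinearWithPropertyO_card_le [Fact q.Prime] (hk : 2 ≤ k) (hkq : k ≤ q)
    (hcount : (k * q) ^ (k * q) * ((k !) - 1) ^ (q * q) < k ! ^ (q * q)) :
    ∃ E : Finset (Fin k → Fin k × ZMod q), IsOrientedLinearWithPropertyO E ∧ #E ≤ q * q := by
  obtain ⟨τ, hτ⟩ := exists_forall_exists_apply_eq_of_card_lt
    (fun (g : Fin k × ZMod q → Fin (Fintype.card (Fin k × ZMod q))) L =>
      Tuple.sort (g ∘ linePoint k q L))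
    (by simpa [Fintype.card_prod, ZMod.card, Fintype.card_perm] using hcount)
  refine ⟨_, isOrientedLinearWithPropertyO_lineHypergraph hk hkq hτ, card_image_le.trans ?_⟩
  simp [ZMod.card]

end Lines

/-- For every `ε > 0` there exists `k₀` such that for all `k ≥ k₀`
there exists an oriented linear `k`-graph with Property O having at most
`(1+ε)·4k⁶(ln k)²·(k!)²` edges; that is, `f'(k) ≤ (1+o(1))·4k⁶ ln²k·(k!)²`. -/
theorem stmt_1 :
    ∀ ε : ℝ, 0 < ε → ∃ k₀ : ℕ, ∀ k : ℕ, k₀ ≤ k →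
      ∃ (n : ℕ) (E : Finset (Fin k → Fin n)),
        (∀ e ∈ E, Function.Injective e) ∧
        (∀ e ∈ E, ∀ f ∈ E, Set.range e = Set.range f → e = f) ∧
        (∀ e ∈ E, ∀ f ∈ E, e ≠ f → (Set.range e ∩ Set.range f).Subsingleton) ∧
        (∀ σ : Fin n → ℕ, Function.Injective σ →
          ∃ e ∈ E, ∀ i j : Fin k, i < j → σ (e i) < σ (e j)) ∧
        (E.card : ℝ) ≤ (1 + ε) * 4 * (k : ℝ) ^ 6 * Real.log k ^ 2 *
          (Nat.factorial k : ℝ) ^ 2 := by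
  intro ε hε
  refine ⟨8, fun k hk => ?_⟩
  obtain ⟨q, hq, hq₁, hq₂⟩ := Nat.exists_prime_lt_and_le_two_mul (2 * k ^ 3 * k !) (by positivity)
  have : Fact q.Prime := ⟨hq⟩
  replace hq₂ : q ≤ 4 * k ^ 3 * k ! := by linarith
  have hkq : k ≤ q := calc
    k ≤ k * (2 * k ^ 2 * k !) := Nat.le_mul_of_pos_right k (by positivity)
    _ ≤ q := by linarith
  obtain ⟨E, hE, hcard⟩ := exists_isOrientedLinearWithPropertyO_card_le (by omega) hkq
    (pow_mul_factorial_sub_one_pow_lt (by omega) hq₁ hq₂)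
  have hE' := hE.image_equiv (Fintype.equivFin _)
  refine ⟨_, _, hE'.injective, hE'.eq_of_range_eq, hE'.linear, hE'.propertyO, ?_⟩
  have hlog : 2 ≤ Real.log k := Real.two_le_log_of_eight_le (by exact_mod_cast hk)
  have hq₂R : (q : ℝ) ≤ 4 * k ^ 3 * k ! := by exact_mod_cast hq₂
  calc (#(E.image _) : ℝ) ≤ q * q := by exact_mod_cast card_image_le.trans hcard
    _ ≤ (4 * k ^ 3 * k !) * (4 * k ^ 3 * k !) := by gcongr
    _ = 4 * k ^ 6 * k ! ^ 2 * 2 ^ 2 := by ring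
    _ ≤ 4 * k ^ 6 * k ! ^ 2 * ((1 + ε) * Real.log k ^ 2) := by gcongr; nlinarith
    _ = (1 + ε) * 4 * k ^ 6 * Real.log k ^ 2 * k ! ^ 2 := by ring
end

section
/- For every integer k ≥ 2, every oriented linear k-graph with Property O has more than (k−1)·(k−1)!/(e·k) vertices; that is, n'(k) ≥ (k−1)·(k−1)!/(e·k). -/
/-
Call an enumeration of a vertex set `S` avoiding if no edge occurs in it as a subsequence, and let
`g S` count them. Put `β = 1 - 1/k` and suppose every vertex has degree at most `(k-1)! β^(k-1)`.
Inserting `v ∈ S` into an avoiding enumeration of `S \ {v}` in each of the `|S|` possible places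
gives an avoiding enumeration of `S` unless some edge `e ∋ v` occurs, and such an enumeration is
determined by the positions of `e` and an avoiding enumeration of `S \ e`. Deleting the vertices
of `e \ {v}` one at a time and using induction, `C(|S|, k) g (S \ e)` is at most
`|S| g (S \ {v}) / (k (k-1)! β^(k-1))`; summing over the edges at `v` gives
`g S ≥ β |S| g (S \ {v})`. Hence `g V > 0`, contradicting Property O, so some vertex has degree
`d > (k-1)! β^(k-1)`. By linearity the edges at that vertex are disjoint elsewhere, so
`|V| - 1 ≥ (k-1) d`, and `β^(k-1) ≥ 1/e`.
-/

open Finset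

namespace List

variable {α : Type*}

theorem erase_insertIdx_of_notMem [DecidableEq α] {a : α} {l : List α} (ha : a ∉ l) {i : ℕ}
    (hi : i ≤ l.length) : (l.insertIdx i a).erase a = l := by
  induction l generalizing i with
  | nil => simp_all
  | cons b l ih =>
    cases i with
    | zero => simp
    | succ i =>
      simp only [mem_cons, not_or] at ha
      rw [insertIdx_succ_cons, erase_cons_tail (by rw [beq_iff_eq]; exact Ne.symm ha.1),
        ih ha.2 (by simpa using hi)]

theorem eq_of_map_eq_of_filter_eq {p : α → Bool} {l₁ l₂ : List α}
    (hmap : l₁.map p = l₂.map p) (hp : l₁.filter p = l₂.filter p)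
    (hnp : l₁.filter (!p ·) = l₂.filter (!p ·)) : l₁ = l₂ := by
  induction l₁ generalizing l₂ with
  | nil => simpa [eq_comm] using hmap
  | cons a l ih =>
    cases l₂ with
    | nil => simp at hmap
    | cons b l₂ =>
      obtain ⟨hab, hmap⟩ := cons.inj hmap
      cases ha : p a <;> simp only [filter_cons, ha, ← hab, Bool.not_false, Bool.not_true,
        if_true, Bool.false_eq_true, if_false, cons.injEq] at hp hnp
      · exact hnp.1 ▸ congrArg _ (ih hmap hp hnp.2)
      · exact hp.1 ▸ congrArg _ (ih hmap hp.2 hnp)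

theorem getElem_mem_iff_mem_image_idxOf [DecidableEq α] {l : List α} (hl : l.Nodup)
    (s : Finset α) {i : ℕ} (hi : i < l.length) : l[i] ∈ s ↔ i ∈ s.image l.idxOf := by
  constructor
  · exact fun h => Finset.mem_image.2 ⟨l[i], h, hl.idxOf_getElem i hi⟩
  · rintro h
    obtain ⟨x, hx, rfl⟩ := Finset.mem_image.1 h
    rwa [getElem_idxOf]

theorem Sublist.filter_eq_of_length_le {p : α → Bool} {u l : List α} (hu : u <+ l)
    (hpu : ∀ x ∈ u, p x) (hlen : (l.filter p).length ≤ u.length) : l.filter p = u := by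
  have : u <+ l.filter p := by simpa [filter_eq_self.2 hpu] using hu.filter p
  exact (this.eq_of_length_le hlen).symm

theorem ofFn_sublist_of_strictMono_idxOf [DecidableEq α] {k : ℕ} {l : List α} {e : Fin k → α}
    (hmem : ∀ i, e i ∈ l) (hmono : StrictMono fun i => l.idxOf (e i)) : ofFn e <+ l := by
  rw [sublist_iff_exists_fin_orderEmbedding_get_eq]
  refine ⟨OrderEmbedding.ofStrictMono
    (fun i => ⟨l.idxOf (e (Fin.cast length_ofFn i)), idxOf_lt_length_iff.2 (hmem _)⟩)
    (fun i j hij => hmono hij), fun i => ?_⟩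
  rw [get_ofFn, get_eq_getElem]
  exact (getElem_idxOf _).symm

end List

theorem Real.one_le_exp_one_mul_one_sub_inv_pow (k : ℕ) :
    1 ≤ Real.exp 1 * (1 - (k : ℝ)⁻¹) ^ (k - 1) := by
  rcases k with _ | _ | n
  · simp
  · simp
  have hinv : 1 - ((n + 1 + 1 : ℕ) : ℝ)⁻¹ = (1 + ((n + 1 : ℕ) : ℝ)⁻¹)⁻¹ := by
    push_cast
    field_simp
    ring
  rw [hinv, Nat.add_sub_cancel, inv_pow, ← div_eq_mul_inv, one_le_div (by positivity)]
  exact Real.one_add_inv_pow_le_exp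

section RatioBound

variable {α : Type*} [DecidableEq α] {f : Finset α → ℝ} {β : ℝ}

theorem mul_pow_mul_descFactorial_le (hβ : 0 ≤ β) {U : Finset α}
    (hf : ∀ T ⊆ U, ∀ u ∈ T, β * #T * f (T.erase u) ≤ f T) {W : Finset α}
    (hW : W ⊆ U) :
    f (U \ W) * β ^ #W * (#U).descFactorial #W ≤ f U := by
  induction W using Finset.induction_on generalizing U with
  | empty => simp
  | @insert u W hu ih =>
    have huU : u ∈ U := hW (mem_insert_self u W)
    obtain ⟨t, ht⟩ : ∃ t, #U = t + 1 := Nat.exists_eq_add_one.2 (card_pos.2 ⟨u, huU⟩)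
    have hWU : W ⊆ U.erase u := fun x hx =>
      mem_erase.2 ⟨fun h => hu (h ▸ hx), hW (mem_insert_of_mem hx)⟩
    have ih' := ih (fun T hT => hf T (hT.trans (erase_subset u U))) hWU
    rw [card_erase_of_mem huU, ht, Nat.add_sub_cancel] at ih'
    have hstep := hf U subset_rfl u huU
    rw [ht] at hstep
    rw [card_insert_of_notMem hu, ht, Nat.succ_descFactorial_succ, sdiff_insert, pow_succ]
    push_cast at hstep ⊢
    calc f ((U \ W).erase u) * (β ^ #W * β) * ((t + 1) * t.descFactorial #W)
        = β * (t + 1) * (f (U.erase u \ W) * β ^ #W * t.descFactorial #W) := by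
          rw [erase_sdiff_comm]; ring
      _ ≤ β * (t + 1) * f (U.erase u) := by gcongr
      _ ≤ f U := hstep

theorem card_mul_choose_mul_le (hβ : 0 ≤ β) {S A : Finset α} {v : α} (hvA : v ∈ A)
    (hAS : A ⊆ S) (hf : ∀ T ⊆ S.erase v, ∀ u ∈ T, β * #T * f (T.erase u) ≤ f T) :
    #A * ((#A - 1).factorial * β ^ (#A - 1)) * ((#S).choose #A * f (S \ A)) ≤
      #S * f (S.erase v) := by
  obtain ⟨j, hj⟩ : ∃ j, #A = j + 1 := Nat.exists_eq_add_one.2 (card_pos.2 ⟨v, hvA⟩)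
  obtain ⟨m, hm⟩ : ∃ m, #S = m + 1 := Nat.exists_eq_add_one.2 (card_pos.2 ⟨v, hAS hvA⟩)
  have hchain := mul_pow_mul_descFactorial_le hβ hf (erase_subset_erase v hAS)
  rw [card_erase_of_mem hvA, card_erase_of_mem (hAS hvA), hj, hm, Nat.add_sub_cancel,
    Nat.add_sub_cancel] at hchain
  have hsdiff : S.erase v \ A.erase v = S \ A := by grind
  rw [hsdiff] at hchain
  have hcount : (#S).choose #A * #A * j.factorial = #S * m.descFactorial j := by
    rw [hj, hm, mul_assoc, ← Nat.factorial_succ, mul_comm,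
      ← Nat.descFactorial_eq_factorial_mul_choose, Nat.succ_descFactorial_succ]
  have hcountR : ((#S).choose #A : ℝ) * #A * j.factorial = #S * m.descFactorial j := by
    exact_mod_cast hcount
  rw [show #A - 1 = j by omega]
  calc (#A : ℝ) * (j.factorial * β ^ j) * ((#S).choose #A * f (S \ A))
      = #S * (f (S \ A) * β ^ j * m.descFactorial j) := by
        linear_combination (β ^ j * f (S \ A)) * hcountR
    _ ≤ #S * f (S.erase v) := by gcongr

end RatioBound

namespace OrientedHypergraph

variable {V : Type*} [DecidableEq V] {k : ℕ}

def vertices (e : Fin k → V) : Finset V := (List.ofFn e).toFinset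

theorem mem_vertices {e : Fin k → V} {x : V} : x ∈ vertices e ↔ x ∈ Set.range e := by
  rw [vertices, List.mem_toFinset, List.mem_ofFn, Set.mem_range]

theorem card_vertices {e : Fin k → V} (he : Function.Injective e) : #(vertices e) = k := by
  rw [vertices, List.toFinset_card_of_nodup (List.nodup_ofFn.2 he), List.length_ofFn]

def degree (E : Finset (Fin k → V)) (v : V) : ℕ := #{e ∈ E | v ∈ vertices e}

/-- Enumerations of a vertex set stand for linear orders of it; an edge is consistent with the
order exactly when it is a sublist of the enumeration. -/
def Avoids (E : Finset (Fin k → V)) (l : List V) : Prop := ∀ e ∈ E, ¬ (List.ofFn e).Sublist l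

instance (E : Finset (Fin k → V)) : DecidablePred (Avoids E) :=
  fun _ => by unfold Avoids; infer_instance

noncomputable def orders (S : Finset V) : Finset (List V) := S.toList.permutations.toFinset

theorem mem_orders {S : Finset V} {l : List V} : l ∈ orders S ↔ l.Nodup ∧ l.toFinset = S := by
  rw [orders, List.mem_toFinset, List.mem_permutations]
  refine ⟨fun h => ⟨h.nodup_iff.2 S.nodup_toList, ?_⟩, fun ⟨hl, hS⟩ => ?_⟩
  · rw [List.toFinset_eq_of_perm _ _ h, toList_toFinset]
  · exact List.perm_of_nodup_nodup_toFinset_eq hl S.nodup_toList (by rw [hS, toList_toFinset])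

theorem length_of_mem_orders {S : Finset V} {l : List V} (h : l ∈ orders S) : l.length = #S := by
  obtain ⟨hl, hS⟩ := mem_orders.1 h
  rw [← List.toFinset_card_of_nodup hl, hS]

noncomputable def avoidCount (E : Finset (Fin k → V)) (S : Finset V) : ℕ :=
  #{l ∈ orders S | Avoids E l}

theorem card_mul_avoidCount_erase_le (E : Finset (Fin k → V)) {S : Finset V} {v : V}
    (hv : v ∈ S) :
    #S * avoidCount E (S.erase v) ≤ #{l ∈ orders S | Avoids E (l.erase v)} := by
  have hinsert : ∀ m ∈ orders (S.erase v), v ∉ m ∧ ∀ i ≤ m.length,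
      m.insertIdx i v ∈ orders S ∧ (m.insertIdx i v).erase v = m := by
    intro m hm
    obtain ⟨hnd, hm⟩ := mem_orders.1 hm
    have hvm : v ∉ m := by simp [← List.mem_toFinset, hm]
    refine ⟨hvm, fun i hi =>
      ⟨mem_orders.2 ⟨?_, ?_⟩, List.erase_insertIdx_of_notMem hvm hi⟩⟩
    · exact (List.perm_insertIdx v m hi).nodup_iff.2 (hnd.cons hvm)
    · rw [List.toFinset_eq_of_perm _ _ (List.perm_insertIdx v m hi), List.toFinset_cons, hm,
        insert_erase hv]
  have hlen : ∀ m ∈ orders (S.erase v), ∀ i < #S, i ≤ m.length := fun m hm i hi => by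
    rw [length_of_mem_orders hm, card_erase_of_mem hv]; omega
  calc #S * avoidCount E (S.erase v)
      = #(range #S ×ˢ {m ∈ orders (S.erase v) | Avoids E m}) := by
        rw [card_product, card_range, avoidCount]
    _ ≤ _ := by
      refine card_le_card_of_injOn (fun p => p.2.insertIdx p.1 v) ?_ ?_
      · rintro ⟨i, m⟩ hp
        simp only [mem_coe, mem_product, mem_range, mem_filter] at hp
        obtain ⟨hi, hm, havoid⟩ := hp
        obtain ⟨hl, herase⟩ := (hinsert m hm).2 i (hlen m hm i hi)
        simpa [hl, herase] using havoid
      · rintro ⟨i, m⟩ hp ⟨j, m'⟩ hq heq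
        simp only [mem_coe, mem_product, mem_range, mem_filter] at hp hq
        simp only at heq
        have hmm' : m = m' := by
          rw [← ((hinsert m hp.2.1).2 i (hlen m hp.2.1 i hp.1)).2, heq,
            ((hinsert m' hq.2.1).2 j (hlen m' hq.2.1 j hq.1)).2]
        subst hmm'
        rw [List.injOn_insertIdx_index_of_notMem m v (hinsert m hp.2.1).1
          (hlen m hp.2.1 i hp.1) (hlen m hq.2.1 j hq.1) heq]

theorem filter_mem_vertices_eq {e : Fin k → V} (he : Function.Injective e) {l : List V}
    (hl : l.Nodup) (hsl : (List.ofFn e).Sublist l) :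
    l.filter (· ∈ vertices e) = List.ofFn e := by
  refine hsl.filter_eq_of_length_le (fun x hx => by simpa [vertices] using hx) ?_
  rw [List.length_ofFn, ← List.toFinset_card_of_nodup (hl.filter _)]
  exact (card_le_card fun x hx => by simp_all).trans (card_vertices he).le

theorem eq_of_image_idxOf_eq_of_filter_eq {e : Fin k → V} (he : Function.Injective e)
    {S : Finset V} {l₁ l₂ : List V} (hl₁ : l₁ ∈ orders S) (hl₂ : l₂ ∈ orders S)
    (he₁ : (List.ofFn e).Sublist l₁) (he₂ : (List.ofFn e).Sublist l₂)
    (himage : (vertices e).image l₁.idxOf = (vertices e).image l₂.idxOf)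
    (hfilter : l₁.filter (· ∉ vertices e) = l₂.filter (· ∉ vertices e)) :
    l₁ = l₂ := by
  have hnd₁ := (mem_orders.1 hl₁).1
  have hnd₂ := (mem_orders.1 hl₂).1
  refine List.eq_of_map_eq_of_filter_eq (p := (· ∈ vertices e)) ?_ ?_ (by simpa using hfilter)
  · have hlen : l₁.length = l₂.length := by
      rw [length_of_mem_orders hl₁, length_of_mem_orders hl₂]
    refine List.ext_getElem (by simpa using hlen) fun i hi₁ hi₂ => ?_
    rw [List.length_map] at hi₁ hi₂
    simp only [List.getElem_map, decide_eq_decide]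
    rw [List.getElem_mem_iff_mem_image_idxOf hnd₁ _ hi₁,
      List.getElem_mem_iff_mem_image_idxOf hnd₂ _ hi₂, himage]
  · rw [filter_mem_vertices_eq he hnd₁ he₁, filter_mem_vertices_eq he hnd₂ he₂]

theorem card_filter_sublist_le (E : Finset (Fin k → V)) {e : Fin k → V}
    (he : Function.Injective e) (S : Finset V) :
    #{l ∈ orders S | (List.ofFn e).Sublist l ∧ Avoids E (l.filter (· ∉ vertices e))} ≤
      (#S).choose k * avoidCount E (S \ vertices e) := by
  calc _ ≤ #(powersetCard k (range #S) ×ˢ {m ∈ orders (S \ vertices e) | Avoids E m}) := by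
        refine card_le_card_of_injOn
          (fun l => ((vertices e).image l.idxOf, l.filter (· ∉ vertices e))) ?_ ?_
        · intro l hl
          simp only [mem_coe, mem_filter] at hl
          obtain ⟨hlS, hsl, havoid⟩ := hl
          obtain ⟨hnd, hS⟩ := mem_orders.1 hlS
          have hmem : ∀ x ∈ vertices e, x ∈ l := fun x hx =>
            hsl.subset (List.mem_toFinset.1 hx)
          simp only [mem_coe, mem_product, mem_powersetCard, mem_filter]
          refine ⟨⟨fun i hi => ?_, ?_⟩, mem_orders.2 ⟨hnd.filter _, ?_⟩, havoid⟩
          · obtain ⟨x, hx, rfl⟩ := mem_image.1 hi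
            rw [mem_range, ← length_of_mem_orders hlS]
            exact List.idxOf_lt_length_iff.2 (hmem x hx)
          · rw [card_image_of_injOn fun x hx y _ hxy => (List.idxOf_inj (hmem x hx)).1 hxy,
              card_vertices he]
          · rw [List.toFinset_filter, hS, sdiff_eq_filter]
            simp
        · intro l₁ hl₁ l₂ hl₂ heq
          simp only [mem_coe, mem_filter] at hl₁ hl₂
          simp only [Prod.mk.injEq] at heq
          exact eq_of_image_idxOf_eq_of_filter_eq he hl₁.1 hl₂.1 hl₁.2.1 hl₂.2.1 heq.1 heq.2
    _ = (#S).choose k * avoidCount E (S \ vertices e) := by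
        rw [card_product, card_powersetCard, card_range, avoidCount]

theorem Avoids.exists_of_erase {E : Finset (Fin k → V)} {l : List V} {v : V}
    (h : Avoids E (l.erase v)) (hl : ¬Avoids E l) : ∃ e ∈ E, v ∈ vertices e ∧
      (List.ofFn e).Sublist l ∧ Avoids E (l.filter (· ∉ vertices e)) := by
  obtain ⟨e, he, hsl⟩ : ∃ e ∈ E, (List.ofFn e).Sublist l := by simpa [Avoids] using hl
  have hve : v ∈ vertices e := by
    by_contra hve
    refine h e he ?_
    simpa [List.erase_of_not_mem (mt List.mem_toFinset.2 hve)] using hsl.erase v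
  refine ⟨e, he, hve, hsl, fun f hf hslf => h f hf ?_⟩
  have hvf : v ∉ List.ofFn f := fun hvf => by simpa [hve] using hslf.subset hvf
  simpa [List.erase_of_not_mem hvf] using (hslf.trans List.filter_sublist).erase v

theorem card_mul_avoidCount_erase_le_add (E : Finset (Fin k → V))
    (hinj : ∀ e ∈ E, Function.Injective e) {S : Finset V} {v : V} (hv : v ∈ S) :
    #S * avoidCount E (S.erase v) ≤ avoidCount E S +
      ∑ e ∈ E with v ∈ vertices e ∧ vertices e ⊆ S,
        (#S).choose k * avoidCount E (S \ vertices e) := by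
  set Ev := {e ∈ E | v ∈ vertices e ∧ vertices e ⊆ S}
  let B (e : Fin k → V) :=
    {l ∈ orders S | (List.ofFn e).Sublist l ∧ Avoids E (l.filter (· ∉ vertices e))}
  have hcover : {l ∈ orders S | Avoids E (l.erase v)} ⊆
      {l ∈ orders S | Avoids E l} ∪ Ev.biUnion B := by
    intro l hl
    rw [mem_filter] at hl
    by_cases hgood : Avoids E l
    · exact mem_union_left _ (mem_filter.2 ⟨hl.1, hgood⟩)
    obtain ⟨e, he, hve, hsl, havoid⟩ := hl.2.exists_of_erase hgood
    have heS : vertices e ⊆ S := fun x hx => by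
      rw [← (mem_orders.1 hl.1).2, List.mem_toFinset]
      exact hsl.subset (List.mem_toFinset.1 hx)
    exact mem_union_right _ (mem_biUnion.2
      ⟨e, mem_filter.2 ⟨he, hve, heS⟩, mem_filter.2 ⟨hl.1, hsl, havoid⟩⟩)
  calc #S * avoidCount E (S.erase v)
      ≤ #{l ∈ orders S | Avoids E (l.erase v)} := card_mul_avoidCount_erase_le E hv
    _ ≤ avoidCount E S + #(Ev.biUnion B) := (card_le_card hcover).trans (card_union_le _ _)
    _ ≤ avoidCount E S + ∑ e ∈ Ev, #(B e) := Nat.add_le_add_left card_biUnion_le _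
    _ ≤ _ := by
        gcongr with e he
        exact card_filter_sublist_le E (hinj e (mem_filter.1 he).1) S

theorem mul_sum_choose_mul_avoidCount_sdiff_le (hk : 2 ≤ k) {E : Finset (Fin k → V)}
    (hinj : ∀ e ∈ E, Function.Injective e)
    (hD : ∀ v, (degree E v : ℝ) ≤ (k - 1).factorial * (1 - (k : ℝ)⁻¹) ^ (k - 1))
    {S : Finset V} {v : V}
    (hS : ∀ T ⊆ S.erase v, ∀ u ∈ T,
      (1 - (k : ℝ)⁻¹) * #T * avoidCount E (T.erase u) ≤ avoidCount E T) :
    k * ∑ e ∈ E with v ∈ vertices e ∧ vertices e ⊆ S,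
        ((#S).choose k * avoidCount E (S \ vertices e) : ℝ) ≤
      #S * avoidCount E (S.erase v) := by
  set Ev := {e ∈ E | v ∈ vertices e ∧ vertices e ⊆ S}
  set M : ℝ := (k - 1).factorial * (1 - (k : ℝ)⁻¹) ^ (k - 1)
  have hβ : 0 < 1 - (k : ℝ)⁻¹ := sub_pos.2 (inv_lt_one_of_one_lt₀ (by exact_mod_cast hk))
  refine le_of_mul_le_mul_left ?_ (by positivity : 0 < M)
  calc M * (k * ∑ e ∈ Ev, ((#S).choose k * avoidCount E (S \ vertices e) : ℝ))
      = ∑ e ∈ Ev, k * M * ((#S).choose k * avoidCount E (S \ vertices e) : ℝ) := by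
        rw [mul_sum, mul_sum]; ring_nf
    _ ≤ ∑ e ∈ Ev, (#S * avoidCount E (S.erase v) : ℝ) := sum_le_sum fun e he => by
        obtain ⟨heE, hve, heS⟩ := mem_filter.1 he
        simpa [card_vertices (hinj e heE)] using
          card_mul_choose_mul_le (f := fun T => (avoidCount E T : ℝ)) hβ.le hve heS hS
    _ ≤ degree E v * (#S * avoidCount E (S.erase v) : ℝ) := by
        rw [sum_const, nsmul_eq_mul]
        gcongr
        exact card_le_card (monotone_filter_right E fun _ _ => And.left)
    _ ≤ M * (#S * avoidCount E (S.erase v)) := by gcongr; exact hD v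

theorem one_sub_inv_mul_card_mul_avoidCount_erase_le (hk : 2 ≤ k) {E : Finset (Fin k → V)}
    (hinj : ∀ e ∈ E, Function.Injective e)
    (hD : ∀ v, (degree E v : ℝ) ≤ (k - 1).factorial * (1 - (k : ℝ)⁻¹) ^ (k - 1))
    (S : Finset V) {v : V} (hv : v ∈ S) :
    (1 - (k : ℝ)⁻¹) * #S * avoidCount E (S.erase v) ≤ avoidCount E S := by
  induction S using Finset.strongInduction generalizing v with
  | H S ih =>
  have hsum := mul_sum_choose_mul_avoidCount_sdiff_le hk hinj hD
    fun T hT u hu => ih T (lt_of_le_of_lt hT (erase_ssubset hv)) hu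
  have hcount := (Nat.cast_le (α := ℝ)).2 (card_mul_avoidCount_erase_le_add E hinj hv)
  push_cast at hcount
  have hk0 : (0 : ℝ) < k := by positivity
  refine le_of_mul_le_mul_left ?_ hk0
  calc k * ((1 - (k : ℝ)⁻¹) * #S * avoidCount E (S.erase v))
      = k * (#S * avoidCount E (S.erase v)) - #S * avoidCount E (S.erase v) := by
        field_simp
    _ ≤ k * avoidCount E S := by nlinarith

theorem avoidCount_pos (hk : 2 ≤ k) {E : Finset (Fin k → V)}
    (hinj : ∀ e ∈ E, Function.Injective e)
    (hD : ∀ v, (degree E v : ℝ) ≤ (k - 1).factorial * (1 - (k : ℝ)⁻¹) ^ (k - 1))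
    (S : Finset V) : 0 < avoidCount E S := by
  induction S using Finset.induction_on with
  | empty =>
    refine card_pos.2 ⟨[], mem_filter.2 ⟨by simp [orders], fun e _ he => ?_⟩⟩
    have := congrArg List.length (List.sublist_nil.1 he)
    rw [List.length_ofFn, List.length_nil] at this
    omega
  | @insert a s ha ih =>
    have hβ : 0 < 1 - (k : ℝ)⁻¹ := sub_pos.2 (inv_lt_one_of_one_lt₀ (by exact_mod_cast hk))
    have hratio := one_sub_inv_mul_card_mul_avoidCount_erase_le hk hinj hD (insert a s)
      (mem_insert_self a s)
    rw [erase_insert ha] at hratio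
    have : (0 : ℝ) < avoidCount E (insert a s) :=
      lt_of_lt_of_le (by have := card_pos.2 (insert_nonempty a s); positivity) hratio
    exact_mod_cast this

theorem avoidCount_univ_eq_zero [Fintype V] {E : Finset (Fin k → V)}
    (hO : ∀ σ : V → ℕ, Function.Injective σ →
      ∃ e ∈ E, ∀ i j : Fin k, i < j → σ (e i) < σ (e j)) :
    avoidCount E univ = 0 := by
  refine card_eq_zero.2 (filter_eq_empty_iff.2 fun l hl havoid => ?_)
  have hmem : ∀ x, x ∈ l := by simp [← List.mem_toFinset, (mem_orders.1 hl).2]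
  obtain ⟨e, he, hmono⟩ := hO (l.idxOf ·) fun x y h => (List.idxOf_inj (hmem x)).1 h
  exact havoid e he (List.ofFn_sublist_of_strictMono_idxOf (fun _ => hmem _) hmono)

theorem degree_mul_le [Fintype V] {E : Finset (Fin k → V)}
    (hinj : ∀ e ∈ E, Function.Injective e)
    (hlin : ∀ e ∈ E, ∀ f ∈ E, e ≠ f → (Set.range e ∩ Set.range f).Subsingleton)
    (v : V) :
    degree E v * (k - 1) ≤ Fintype.card V - 1 := by
  set Ev := {e ∈ E | v ∈ vertices e}
  have hdisj : (Ev : Set (Fin k → V)).PairwiseDisjoint fun e => (vertices e).erase v := by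
    intro e he f hf hef
    simp only [mem_coe, mem_filter, Ev] at he hf
    refine disjoint_left.2 fun x hxe hxf => (mem_erase.1 hxe).1 ?_
    exact hlin e he.1 f hf.1 hef
      ⟨mem_vertices.1 (mem_erase.1 hxe).2, mem_vertices.1 (mem_erase.1 hxf).2⟩
      ⟨mem_vertices.1 he.2, mem_vertices.1 hf.2⟩
  calc degree E v * (k - 1) = #(Ev.biUnion fun e => (vertices e).erase v) := by
        rw [card_biUnion hdisj, sum_const_nat fun e he => ?_, degree]
        obtain ⟨heE, hve⟩ := mem_filter.1 he
        rw [card_erase_of_mem hve, card_vertices (hinj e heE)]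
    _ ≤ #(univ.erase v) := card_le_card fun x hx => by
        obtain ⟨e, -, hxe⟩ := mem_biUnion.1 hx
        exact mem_erase.2 ⟨(mem_erase.1 hxe).1, mem_univ x⟩
    _ = Fintype.card V - 1 := by rw [card_erase_of_mem (mem_univ v), card_univ]

theorem mul_factorial_mul_one_sub_inv_pow_lt_card [Fintype V] (hk : 2 ≤ k)
    {E : Finset (Fin k → V)} (hinj : ∀ e ∈ E, Function.Injective e)
    (hlin : ∀ e ∈ E, ∀ f ∈ E, e ≠ f → (Set.range e ∩ Set.range f).Subsingleton)
    (hO : ∀ σ : V → ℕ, Function.Injective σ →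
      ∃ e ∈ E, ∀ i j : Fin k, i < j → σ (e i) < σ (e j)) :
    ((k : ℝ) - 1) * ((k - 1).factorial * (1 - (k : ℝ)⁻¹) ^ (k - 1)) < Fintype.card V := by
  obtain ⟨v, hv⟩ : ∃ v, (k - 1).factorial * (1 - (k : ℝ)⁻¹) ^ (k - 1) < degree E v := by
    by_contra! hD
    exact (avoidCount_pos hk hinj hD univ).ne' (avoidCount_univ_eq_zero hO)
  have hdeg := degree_mul_le hinj hlin v
  have hV : 1 ≤ Fintype.card V := Fintype.card_pos_iff.2 ⟨v⟩
  have hdegR : (degree E v : ℝ) * ((k : ℝ) - 1) ≤ Fintype.card V - 1 := by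
    have := (Nat.cast_le (α := ℝ)).2 hdeg
    push_cast [Nat.cast_sub (by omega : 1 ≤ k), Nat.cast_sub hV] at this
    exact this
  have hk1 : (0 : ℝ) < k - 1 := by
    have : (2 : ℝ) ≤ k := by exact_mod_cast hk
    linarith
  calc ((k : ℝ) - 1) * ((k - 1).factorial * (1 - (k : ℝ)⁻¹) ^ (k - 1))
      < ((k : ℝ) - 1) * degree E v := by gcongr
    _ ≤ Fintype.card V - 1 := by linarith
    _ < Fintype.card V := by linarith

end OrientedHypergraph

theorem stmt_2_general (k : ℕ) (hk : 2 ≤ k) (V : Type*) [Fintype V]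
    (E : Finset (Fin k → V))
    (hinj : ∀ e ∈ E, Function.Injective e)
    (hlin : ∀ e ∈ E, ∀ f ∈ E, e ≠ f → (Set.range e ∩ Set.range f).Subsingleton)
    (hO : ∀ σ : V → ℕ, Function.Injective σ →
      ∃ e ∈ E, ∀ i j : Fin k, i < j → σ (e i) < σ (e j)) :
    ((k : ℝ) - 1) * (Nat.factorial (k - 1) : ℝ) / (Real.exp 1 * (k : ℝ)) <
      (Fintype.card V : ℝ) := by
  classical
  have hexp := Real.one_le_exp_one_mul_one_sub_inv_pow k
  have hk1 : (1 : ℝ) ≤ k := by exact_mod_cast (by omega : 1 ≤ k)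
  refine lt_of_le_of_lt ?_
    (OrientedHypergraph.mul_factorial_mul_one_sub_inv_pow_lt_card hk hinj hlin hO)
  rw [div_le_iff₀ (by positivity)]
  calc ((k : ℝ) - 1) * (k - 1).factorial
      ≤ ((k : ℝ) - 1) * (k - 1).factorial * (Real.exp 1 * (1 - (k : ℝ)⁻¹) ^ (k - 1) * k) :=
        le_mul_of_one_le_right (mul_nonneg (by linarith) (by positivity)) (by nlinarith)
    _ = _ := by ring

/-- For every integer `k ≥ 2`, every oriented linear `k`-graph with
Property O has more than `(k−1)·(k−1)!/(e·k)` vertices; that is,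
`n'(k) ≥ (k−1)·(k−1)!/(e·k)`. -/
theorem stmt_2 (k : ℕ) (hk : 2 ≤ k) (V : Type*) [Fintype V]
    (E : Finset (Fin k → V))
    (hinj : ∀ e ∈ E, Function.Injective e)
    (hdist : ∀ e ∈ E, ∀ f ∈ E, Set.range e = Set.range f → e = f)
    (hlin : ∀ e ∈ E, ∀ f ∈ E, e ≠ f → (Set.range e ∩ Set.range f).Subsingleton)
    (hO : ∀ σ : V → ℕ, Function.Injective σ →
      ∃ e ∈ E, ∀ i j : Fin k, i < j → σ (e i) < σ (e j)) :
    ((k : ℝ) - 1) * (Nat.factorial (k - 1) : ℝ) / (Real.exp 1 * (k : ℝ)) <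
      (Fintype.card V : ℝ) :=
  stmt_2_general k hk V E hinj hlin hO
end

section
/- For every ε > 0 there exists k₀ such that for all integers k ≥ k₀ there exists an oriented linear k-graph with Property O having at most (1+ε)·4k⁴(ln k)·k! vertices; that is, n'(k) ≤ (1+o(1))·4k⁴ ln k·k!. -/
/-!
Take the vertices `Fin k × 𝔽_q` and, as edges, the `q²` lines `y = m x + c` restricted to `k`
distinct abscissae; two distinct lines meet in at most one point, so the hypergraph is linear.
Orient every line by an independent uniformly random permutation. For a fixed ordering of the
`n = kq` vertices, each line is consistent with it with probability `1 / k!`, so the union bound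
over the `n!` orderings finds a good orientation as soon as `n! (1 - 1/k!)^(q²) < 1`. This holds
for a prime `q ∈ (4k³k!, 8k³k!]` (Bertrand), and then `n ≤ 8k⁴k! ≤ 4k⁴ (ln k) k!` once `k ≥ 8`.
-/

open Function Finset Fintype

namespace OrientedHypergraph

variable {V L : Type*} {k : ℕ}

structure IsLinear (E : Finset (Fin k → V)) : Prop where
  injective : ∀ e ∈ E, Injective e
  eq_of_range_eq : ∀ e ∈ E, ∀ f ∈ E, Set.range e = Set.range f → e = f
  inter_subsingleton : ∀ e ∈ E, ∀ f ∈ E, e ≠ f → (Set.range e ∩ Set.range f).Subsingleton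

def HasPropertyO (E : Finset (Fin k → V)) : Prop :=
  ∀ σ : V → ℕ, Injective σ → ∃ e ∈ E, StrictMono (σ ∘ e)

structure IsLinearFamily (line : L → Fin k → V) : Prop where
  injective : ∀ ℓ, Injective (line ℓ)
  inter_subsingleton : Pairwise fun ℓ ℓ' ↦ (Set.range (line ℓ) ∩ Set.range (line ℓ')).Subsingleton

theorem IsLinearFamily.comp {W : Type*} {line : L → Fin k → V} (h : IsLinearFamily line)
    {f : V → W} (hf : Injective f) : IsLinearFamily fun ℓ ↦ f ∘ line ℓ where
  injective ℓ := hf.comp (h.injective ℓ)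
  inter_subsingleton ℓ ℓ' hne := by
    simpa only [Set.range_comp, ← Set.image_inter hf] using (h.inter_subsingleton hne).image f

theorem IsLinearFamily.range_injective {line : L → Fin k → V} (h : IsLinearFamily line)
    (hk : 2 ≤ k) : Injective fun ℓ ↦ Set.range (line ℓ) := by
  intro ℓ ℓ' (hrange : Set.range (line ℓ) = Set.range (line ℓ'))
  by_contra hne
  have hsub : (Set.range (line ℓ) ∩ Set.range (line ℓ')).Subsingleton := h.inter_subsingleton hne
  rw [hrange, Set.inter_self] at hsub
  have h01 : (⟨0, by omega⟩ : Fin k) ≠ ⟨1, by omega⟩ := by simp [Fin.ext_iff]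
  exact h01 (h.injective ℓ' (hsub (Set.mem_range_self _) (Set.mem_range_self _)))

-- The union bound for a uniformly random `ω`: each `g t` is avoided everywhere by a
-- `((card A - 1) / card A) ^ card L` fraction of all `ω`.
theorem exists_forall_exists_apply_eq [Fintype L] {T A : Type*} [Fintype T] [Fintype A]
    (g : T → L → A)
    (h : card T * (card A - 1) ^ card L < card A ^ card L) :
    ∃ ω : L → A, ∀ t, ∃ ℓ, ω ℓ = g t ℓ := by
  classical
  by_contra! hbad
  let avoiding (t : T) : Finset (L → A) := Fintype.piFinset fun ℓ ↦ univ.erase (g t ℓ)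
  have hcover : (univ : Finset (L → A)) ⊆ univ.biUnion avoiding := fun ω _ ↦ by
    obtain ⟨t, ht⟩ := hbad ω
    refine mem_biUnion.2 ⟨t, mem_univ _, Fintype.mem_piFinset.2 fun ℓ ↦ ?_⟩
    exact mem_erase.2 ⟨ht ℓ, mem_univ _⟩
  have hcard t : #(avoiding t) = (card A - 1) ^ card L := by
    simp [avoiding, Fintype.card_piFinset, card_erase_of_mem]
  have := (card_le_card hcover).trans card_biUnion_le
  simp only [hcard, Finset.card_univ, Fintype.card_fun, sum_const, smul_eq_mul] at this
  omega

theorem exists_equiv_fin_lt_iff [Fintype V] (σ : V → ℕ) (hσ : Injective σ) :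
    ∃ e : V ≃ Fin (card V), ∀ a b, e a < e b ↔ σ a < σ b := by
  let _ : LinearOrder V := LinearOrder.lift' σ hσ
  let e := (orderIsoFinOfCardEq V rfl).symm
  exact ⟨e.toEquiv, fun _ _ ↦ e.lt_iff_lt⟩

section Reorient

variable [Fintype L] [DecidableEq (Fin k → V)]

def reorient (line : L → Fin k → V) (ω : L → Equiv.Perm (Fin k)) : Finset (Fin k → V) :=
  univ.image fun ℓ ↦ line ℓ ∘ ω ℓ

theorem mem_reorient {line : L → Fin k → V} {ω : L → Equiv.Perm (Fin k)} {e : Fin k → V} :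
    e ∈ reorient line ω ↔ ∃ ℓ, line ℓ ∘ ω ℓ = e := by
  simp [reorient]

theorem IsLinearFamily.isLinear_reorient {line : L → Fin k → V} (h : IsLinearFamily line)
    (hk : 2 ≤ k) (ω : L → Equiv.Perm (Fin k)) : IsLinear (reorient line ω) := by
  have hrange ℓ : Set.range (line ℓ ∘ ω ℓ) = Set.range (line ℓ) :=
    (ω ℓ).surjective.range_comp _
  refine ⟨?_, ?_, ?_⟩ <;> simp only [mem_reorient, forall_exists_index, forall_apply_eq_imp_iff]
  · exact fun ℓ ↦ (h.injective ℓ).comp (ω ℓ).injective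
  · intro ℓ ℓ' hℓ
    obtain rfl := h.range_injective hk (by simpa only [hrange] using hℓ)
    rfl
  · intro ℓ ℓ' hne
    rw [hrange, hrange]
    exact h.inter_subsingleton fun hℓ ↦ hne (hℓ ▸ rfl)

theorem exists_hasPropertyO_reorient [Fintype V] {line : L → Fin k → V}
    (hline : ∀ ℓ, Injective (line ℓ))
    (hcard : (card V).factorial * (k.factorial - 1) ^ card L < k.factorial ^ card L) :
    ∃ ω, HasPropertyO (reorient line ω) := by
  classical
  obtain ⟨ω, hω⟩ := exists_forall_exists_apply_eq
    (fun (e : V ≃ Fin (card V)) ℓ ↦ Tuple.sort (e ∘ line ℓ))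
    (by rwa [Fintype.card_equiv (Fintype.equivFin V), Fintype.card_perm, Fintype.card_fin])
  refine ⟨ω, fun σ hσ ↦ ?_⟩
  obtain ⟨e, he⟩ := exists_equiv_fin_lt_iff σ hσ
  obtain ⟨ℓ, hℓ⟩ := hω e
  have hsorted : StrictMono (e ∘ line ℓ ∘ ω ℓ) := by
    rw [hℓ]
    exact (Tuple.monotone_sort _).strictMono_of_injective
      ((e.injective.comp (hline ℓ)).comp (Equiv.injective _))
  exact ⟨line ℓ ∘ ω ℓ, mem_reorient.2 ⟨ℓ, rfl⟩, fun i j hij ↦ (he _ _).1 (hsorted hij)⟩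

end Reorient

section Grid

variable {K : Type*} [Field K]

-- `p = (m, c)` is the line `y = m x + c`; its point above the abscissa `x j` is labelled `(j, y)`.
def gridLine (x : Fin k → K) (p : K × K) (j : Fin k) : Fin k × K :=
  (j, p.1 * x j + p.2)

theorem isLinearFamily_gridLine {x : Fin k → K} (hx : Injective x) :
    IsLinearFamily (gridLine x) where
  injective _ _ _ h := congrArg Prod.fst h
  inter_subsingleton p p' hne := by
    rintro _ ⟨⟨i₀, rfl⟩, ⟨i, hi⟩⟩ _ ⟨⟨j₀, rfl⟩, ⟨j, hj⟩⟩
    simp only [gridLine, Prod.mk.injEq] at hi hj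
    obtain ⟨rfl, hi⟩ := hi
    obtain ⟨rfl, hj⟩ := hj
    by_contra hij
    have hxij : x i - x j ≠ 0 := sub_ne_zero.2 (hx.ne fun h ↦ hij (h ▸ rfl))
    have hslope : p'.1 = p.1 :=
      sub_eq_zero.1 <| (mul_eq_zero.1 (by linear_combination hi - hj)).resolve_right hxij
    exact hne (Prod.ext hslope.symm (by rw [hslope] at hi; linear_combination -hi))

end Grid

theorem two_pow_div_mul_pow_le_succ_pow {a : ℕ} (ha : 1 ≤ a) (m : ℕ) :
    2 ^ (m / a) * a ^ m ≤ (a + 1) ^ m := by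
  have hbernoulli : 2 * a ^ a ≤ (a + 1) ^ a := by
    have := pow_add_mul_le_add_pow (a := a) (b := 1) (Nat.zero_le _) (by omega) a
    rwa [Nat.cast_id, mul_one, ← pow_succ', Nat.sub_add_cancel ha, ← two_mul] at this
  calc 2 ^ (m / a) * a ^ m = (2 * a ^ a) ^ (m / a) * a ^ (m % a) := by
        rw [mul_pow, ← pow_mul, mul_assoc, ← pow_add, Nat.div_add_mod]
    _ ≤ ((a + 1) ^ a) ^ (m / a) * (a + 1) ^ (m % a) := by gcongr; omega
    _ = (a + 1) ^ m := by rw [← pow_mul, ← pow_add, Nat.div_add_mod]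

theorem mul_lt_two_pow_of_le_mul_factorial {k q : ℕ} (hk : 2 ≤ k)
    (hq : q ≤ 8 * k ^ 3 * k.factorial) : k * q < 2 ^ (4 * k ^ 2) :=
  calc k * q ≤ k * (8 * k ^ 3 * k ^ k) := by
        gcongr
        exact hq.trans (by gcongr; exact Nat.factorial_le_pow k)
    _ = 2 ^ 3 * k ^ (k + 4) := by ring
    _ < 2 ^ 3 * (2 ^ k) ^ (k + 4) := by gcongr; exact Nat.lt_two_pow_self
    _ = 2 ^ (k ^ 2 + 4 * k + 3) := by rw [← pow_mul, ← pow_add]; ring_nf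
    _ ≤ 2 ^ (4 * k ^ 2) := Nat.pow_le_pow_right two_pos (by nlinarith)

theorem factorial_mul_pow_lt_pow {k q : ℕ} (hk : 2 ≤ k) (hq_gt : 4 * k ^ 3 * k.factorial < q)
    (hq_le : q ≤ 8 * k ^ 3 * k.factorial) :
    (k * q).factorial * (k.factorial - 1) ^ (q * q) < k.factorial ^ (q * q) := by
  set F := k.factorial
  have hF : 2 ≤ F := hk.trans (Nat.self_le_factorial k)
  have hexp : 4 * k ^ 2 * (k * q) ≤ q * q / (F - 1) :=
    calc 4 * k ^ 2 * (k * q) = 4 * k ^ 3 * q := by ring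
      _ ≤ q * q / F := (Nat.le_div_iff_mul_le (by omega)).2 (by nlinarith)
      _ ≤ q * q / (F - 1) := Nat.div_le_div_left (by omega) (by omega)
  calc (k * q).factorial * (F - 1) ^ (q * q) ≤ (k * q) ^ (k * q) * (F - 1) ^ (q * q) := by
        gcongr; exact Nat.factorial_le_pow _
    _ < 2 ^ (q * q / (F - 1)) * (F - 1) ^ (q * q) := by
        refine Nat.mul_lt_mul_of_pos_right ?_ (pow_pos (by omega) _)
        calc (k * q) ^ (k * q) < (2 ^ (4 * k ^ 2)) ^ (k * q) :=
              Nat.pow_lt_pow_left (mul_lt_two_pow_of_le_mul_factorial hk hq_le)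
                (Nat.mul_ne_zero (by omega) (by omega))
          _ = 2 ^ (4 * k ^ 2 * (k * q)) := by rw [← pow_mul]
          _ ≤ 2 ^ (q * q / (F - 1)) := Nat.pow_le_pow_right two_pos hexp
    _ ≤ F ^ (q * q) := by
        simpa [Nat.sub_add_cancel (by omega : 1 ≤ F)] using
          two_pow_div_mul_pow_le_succ_pow (a := F - 1) (by omega) (q * q)

theorem two_le_log_of_eight_le {x : ℝ} (hx : 8 ≤ x) : 2 ≤ Real.log x := by
  rw [Real.le_log_iff_exp_le (by linarith)]
  calc Real.exp 2 = Real.exp 1 ^ 2 := by rw [← Real.exp_nat_mul]; norm_num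
    _ ≤ 2.7182818286 ^ 2 := by gcongr; exact Real.exp_one_lt_d9.le
    _ ≤ x := by linarith

theorem exists_isLinear_hasPropertyO {k q : ℕ} (hk : 2 ≤ k) (hq : q.Prime)
    (hq_gt : 4 * k ^ 3 * k.factorial < q) (hq_le : q ≤ 8 * k ^ 3 * k.factorial) :
    ∃ E : Finset (Fin k → Fin (k * q)), IsLinear E ∧ HasPropertyO E := by
  classical
  have : Fact q.Prime := ⟨hq⟩
  have hkq : k ≤ q := by nlinarith [Nat.factorial_pos k, Nat.le_self_pow (n := 3) (by norm_num) k]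
  obtain ⟨x⟩ : Nonempty (Fin k ↪ ZMod q) := Function.Embedding.nonempty_of_card_le (by simpa)
  let toFin : Fin k × ZMod q ≃ Fin (k * q) := equivFinOfCardEq (by simp)
  have hlines := (isLinearFamily_gridLine x.injective).comp toFin.injective
  obtain ⟨ω, hω⟩ := exists_hasPropertyO_reorient hlines.injective <| by
    simpa using factorial_mul_pow_lt_pow hk hq_gt hq_le
  exact ⟨_, hlines.isLinear_reorient hk ω, hω⟩

end OrientedHypergraph

open OrientedHypergraph in
/-- For every `ε > 0` there exists `k₀` such that for all `k ≥ k₀`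
there exists an oriented linear `k`-graph with Property O having at most
`(1+ε)·4k⁴(ln k)·k!` vertices; that is, `n'(k) ≤ (1+o(1))·4k⁴ ln k·k!`. -/
theorem stmt_3 :
    ∀ ε : ℝ, 0 < ε → ∃ k₀ : ℕ, ∀ k : ℕ, k₀ ≤ k →
      ∃ (n : ℕ) (E : Finset (Fin k → Fin n)),
        (∀ e ∈ E, Function.Injective e) ∧
        (∀ e ∈ E, ∀ f ∈ E, Set.range e = Set.range f → e = f) ∧
        (∀ e ∈ E, ∀ f ∈ E, e ≠ f → (Set.range e ∩ Set.range f).Subsingleton) ∧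
        (∀ σ : Fin n → ℕ, Function.Injective σ →
          ∃ e ∈ E, ∀ i j : Fin k, i < j → σ (e i) < σ (e j)) ∧
        (n : ℝ) ≤ (1 + ε) * 4 * (k : ℝ) ^ 4 * Real.log k * (Nat.factorial k : ℝ) := by
  intro ε hε
  refine ⟨8, fun k hk ↦ ?_⟩
  obtain ⟨q, hq, hq_gt, hq_le⟩ :=
    Nat.exists_prime_lt_and_le_two_mul (4 * k ^ 3 * k.factorial) (by positivity)
  obtain ⟨E, hE, hO⟩ := exists_isLinear_hasPropertyO (by omega) hq hq_gt (by linarith)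
  refine ⟨k * q, E, hE.injective, hE.eq_of_range_eq, hE.inter_subsingleton, fun σ hσ ↦ ?_, ?_⟩
  · obtain ⟨e, he, hmono⟩ := hO σ hσ
    exact ⟨e, he, fun _ _ hij ↦ hmono hij⟩
  · have hn : k * q ≤ 4 * k ^ 4 * 2 * k.factorial :=
      calc k * q ≤ k * (2 * (4 * k ^ 3 * k.factorial)) := by gcongr
        _ = 4 * k ^ 4 * 2 * k.factorial := by ring
    have hlog := two_le_log_of_eight_le (x := k) (by exact_mod_cast hk)
    calc ((k * q : ℕ) : ℝ) ≤ 1 * 4 * k ^ 4 * 2 * k.factorial := by rw [one_mul]; exact_mod_cast hn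
      _ ≤ (1 + ε) * 4 * k ^ 4 * Real.log k * k.factorial := by gcongr; linarith
end

section
/- For every integer k ≥ 3, every k-graph with the weak Erdős–Szekeres property has at least k!/2 + 1 edges; that is, f_wES(k) ≥ k!/2 + 1. -/
/-!
Order `V` by `σ` and let `n = |V|`. Precomposing a bijection `τ : V ≃ Fin n` with the `k!`
permutations of an edge `e` gives `k!` distinct bijections, at most one of which is increasing
on `e` (a strictly monotone permutation of a finite chain is trivial), and likewise for
decreasing. Hence at most `N / k!` of the `N = n!` bijections are increasing on `e`, and as many
are decreasing. The order `σ` itself is increasing on every edge and its reverse is decreasing on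
every edge, so the weak Erdős–Szekeres property gives `N ≤ 2 + |E| · 2 (N / k! - 1)`, which
forces `2|E| > k!` once `k! > 2`; parity of `k!` does the rest.
-/

open Finset Equiv Equiv.Perm
open scoped Nat

section Rigidity

variable {V β : Type*} [LinearOrder V] [Preorder β] {f : V → β} {e : Finset V} {p : Perm e}

theorem Equiv.Perm.eq_one_of_strictMonoOn_comp_ofSubtype (hf : StrictMonoOn f e)
    (hfp : StrictMonoOn (f ∘ ofSubtype p) e) : p = 1 := by
  have hp : StrictMono p := fun x y hxy => by
    have h := hfp x.2 y.2 hxy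
    simp only [Function.comp_apply, ofSubtype_apply_coe] at h
    exact (hf.lt_iff_lt (p x).2 (p y).2).1 h
  exact Equiv.ext fun _ => hp.apply_eq

theorem Equiv.Perm.eq_one_of_strictAntiOn_comp_ofSubtype (hf : StrictAntiOn f e)
    (hfp : StrictAntiOn (f ∘ ofSubtype p) e) : p = 1 :=
  eq_one_of_strictMonoOn_comp_ofSubtype (strictMonoOn_toDual_comp_iff.2 hf)
    (strictMonoOn_toDual_comp_iff.2 hfp)

end Rigidity

theorem card_mul_factorial_le_card_equiv {V α : Type*} [Fintype V] [DecidableEq V] [Fintype α]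
    [DecidableEq α] {S : Finset (V ≃ α)} {e : Finset V}
    (hS : ∀ τ ∈ S, ∀ p : Perm e, (ofSubtype p).trans τ ∈ S → p = 1) :
    #S * (#e)! ≤ Fintype.card (V ≃ α) := by
  calc #S * (#e)! = #(S ×ˢ (univ : Finset (Perm e))) := by
        rw [card_product, Finset.card_univ, Fintype.card_perm, Fintype.card_coe]
    _ ≤ #(univ : Finset (V ≃ α)) := by
        refine card_le_card_of_injOn (fun x => (ofSubtype x.2).trans x.1)
          (fun _ _ => mem_univ _) ?_
        rintro ⟨τ₁, p₁⟩ h₁ ⟨τ₂, p₂⟩ h₂ h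
        simp only [coe_product, coe_univ, Set.mem_prod, mem_coe, Set.mem_univ, and_true]
          at h₁ h₂ h
        have hτ₁ : (ofSubtype (p₂ * p₁⁻¹)).trans τ₂ = τ₁ := by
          rw [map_mul, map_inv, Perm.mul_def, Perm.inv_def, trans_assoc, ← h,
            ← trans_assoc, symm_trans_self, refl_trans]
        have hp : p₂ * p₁⁻¹ = 1 := hS τ₂ h₂ _ (hτ₁ ▸ h₁)
        rw [hp, map_one, Perm.one_def, refl_trans] at hτ₁
        rw [mul_inv_eq_one.1 hp, hτ₁]
    _ = Fintype.card (V ≃ α) := Finset.card_univ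

theorem card_le_of_subset_insert_insert_biUnion {ι β : Type*} [DecidableEq β] {Ω : Finset β}
    {a b : β} {A B : ι → Finset β} {E : Finset ι} {M : ℕ}
    (hΩ : Ω ⊆ insert a (insert b (E.biUnion fun e => A e ∪ B e)))
    (ha : ∀ e ∈ E, a ∈ A e) (hb : ∀ e ∈ E, b ∈ B e)
    (hA : ∀ e ∈ E, #(A e) ≤ M) (hB : ∀ e ∈ E, #(B e) ≤ M) :
    #Ω ≤ 2 + #E * (2 * (M - 1)) := by
  have hΩ' : Ω ⊆ insert a (insert b (E.biUnion fun e => (A e).erase a ∪ (B e).erase b)) := by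
    intro x hx
    have := hΩ hx
    simp only [mem_insert, mem_biUnion, mem_union, mem_erase] at this ⊢
    grind
  calc #Ω ≤ #(E.biUnion fun e => (A e).erase a ∪ (B e).erase b) + 2 :=
        (card_le_card hΩ').trans <| (card_insert_le _ _).trans <|
          Nat.add_le_add_right (card_insert_le _ _) 1
    _ ≤ ∑ e ∈ E, (#((A e).erase a) + #((B e).erase b)) + 2 := by
        gcongr
        exact card_biUnion_le.trans <| sum_le_sum fun _ _ => card_union_le _ _
    _ ≤ ∑ _ ∈ E, 2 * (M - 1) + 2 := by
        gcongr with e he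
        rw [card_erase_of_mem (ha e he), card_erase_of_mem (hb e he)]
        have := hA e he
        have := hB e he
        omega
    _ = 2 + #E * (2 * (M - 1)) := by rw [sum_const, smul_eq_mul, add_comm]

theorem Nat.lt_two_mul_of_mul_le_of_le_two_add_mul {K M N m : ℕ} (hK : 2 < K) (hM : 1 ≤ M)
    (hMK : M * K ≤ N) (hN : N ≤ 2 + m * (2 * (M - 1))) : K < 2 * m := by
  obtain ⟨t, rfl⟩ : ∃ t, M = t + 1 := ⟨M - 1, by omega⟩
  rw [Nat.add_sub_cancel] at hN
  by_contra! h
  have : (t + 1) * K ≤ 2 + K * t := calc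
    (t + 1) * K ≤ N := hMK
    _ ≤ 2 + m * (2 * t) := hN
    _ ≤ 2 + K * t := by nlinarith
  nlinarith

theorem factorial_lt_two_mul_card_of_forall_strictMonoOn_or_strictAntiOn {V : Type*}
    [LinearOrder V] [Fintype V] {k : ℕ} (hk : 3 ≤ k) {E : Finset (Finset V)}
    (hcard : ∀ e ∈ E, #e = k)
    (hE : ∀ τ : V ≃ Fin (Fintype.card V), ∃ e ∈ E, StrictMonoOn τ e ∨ StrictAntiOn τ e) :
    k ! < 2 * #E := by
  classical
  set n := Fintype.card V
  let ι : V ≃ Fin n := (Fintype.orderIsoFinOfCardEq V rfl).symm.toEquiv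
  have hι : StrictMono ι := (Fintype.orderIsoFinOfCardEq V rfl).symm.strictMono
  let ι' : V ≃ Fin n := ι.trans Fin.revPerm
  have hι' : StrictAnti ι' := Fin.rev_strictAnti.comp_strictMono hι
  set M := Fintype.card (V ≃ Fin n) / (k !)
  have hmono : ∀ e ∈ E, #{τ : V ≃ Fin n | StrictMonoOn τ e} ≤ M := fun e he =>
    (Nat.le_div_iff_mul_le k.factorial_pos).2 <| hcard e he ▸
      card_mul_factorial_le_card_equiv fun _ hτ _ hp =>
        eq_one_of_strictMonoOn_comp_ofSubtype (mem_filter.1 hτ).2 (mem_filter.1 hp).2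
  have hanti : ∀ e ∈ E, #{τ : V ≃ Fin n | StrictAntiOn τ e} ≤ M := fun e he =>
    (Nat.le_div_iff_mul_le k.factorial_pos).2 <| hcard e he ▸
      card_mul_factorial_le_card_equiv fun _ hτ _ hp =>
        eq_one_of_strictAntiOn_comp_ofSubtype (mem_filter.1 hτ).2 (mem_filter.1 hp).2
  have hι_mono (e : Finset V) : ι ∈ ({τ : V ≃ Fin n | StrictMonoOn τ e} : Finset _) :=
    mem_filter.2 ⟨mem_univ _, hι.strictMonoOn _⟩
  have hι'_anti (e : Finset V) : ι' ∈ ({τ : V ≃ Fin n | StrictAntiOn τ e} : Finset _) :=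
    mem_filter.2 ⟨mem_univ _, hι'.strictAntiOn _⟩
  have hcount : Fintype.card (V ≃ Fin n) ≤ 2 + #E * (2 * (M - 1)) :=
    card_le_of_subset_insert_insert_biUnion (Ω := univ) (a := ι) (b := ι')
      (fun τ _ => by
        obtain ⟨e, he, h⟩ := hE τ
        simp only [mem_insert, mem_biUnion, mem_union, mem_filter, mem_univ, true_and]
        exact Or.inr (Or.inr ⟨e, he, h⟩))
      (fun e _ => hι_mono e) (fun e _ => hι'_anti e) hmono hanti
  obtain ⟨e₀, he₀, -⟩ := hE ι
  have hM : 1 ≤ M := (card_pos.2 ⟨ι, hι_mono e₀⟩).trans_le (hmono e₀ he₀)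
  have hk! : 2 < k ! := (by decide : 2 < 3 !).trans_le (Nat.factorial_le hk)
  exact Nat.lt_two_mul_of_mul_le_of_le_two_add_mul hk! hM (Nat.div_mul_le_self _ _) hcount

/-- For every integer `k ≥ 3`, every `k`-graph with the weak
Erdős–Szekeres property has at least `k!/2 + 1` edges; that is, `f_wES(k) ≥ k!/2 + 1`.

A `k`-graph is a finite set `E` of `k`-element finsets of a finite vertex type `V`.
Linear orders on `V` are encoded by injective maps into `ℕ`. Orders `σ` and `τ` are
monotonically consistent on an edge `e` if `τ` induces on `e` the same order as `σ`
or its reverse. -/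
theorem stmt_4 (k : ℕ) (hk : 3 ≤ k) (V : Type*) [Fintype V]
    (E : Finset (Finset V))
    (hcard : ∀ e ∈ E, e.card = k)
    (hwES : ∃ σ : V → ℕ, Function.Injective σ ∧
      ∀ τ : V → ℕ, Function.Injective τ →
        ∃ e ∈ E, (∀ x ∈ e, ∀ y ∈ e, σ x < σ y → τ x < τ y) ∨
                 (∀ x ∈ e, ∀ y ∈ e, σ x < σ y → τ y < τ x)) :
    (Nat.factorial k : ℝ) / 2 + 1 ≤ E.card := by
  obtain ⟨σ, hσ, hES⟩ := hwES
  -- Here `x < y` unfolds to `σ x < σ y`, so `hES` is about `StrictMonoOn`/`StrictAntiOn`.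
  let : LinearOrder V := LinearOrder.lift' σ hσ
  have hlt : k ! < 2 * #E :=
    factorial_lt_two_mul_card_of_forall_strictMonoOn_or_strictAntiOn hk hcard fun τ =>
      hES (fun v => τ v) (Fin.val_injective.comp τ.injective)
  obtain ⟨d, hd⟩ : 2 ∣ k ! := Nat.dvd_factorial two_pos (by omega)
  have h : (k ! : ℝ) + 2 ≤ 2 * #E := by exact_mod_cast (by omega : k ! + 2 ≤ 2 * #E)
  linarith
end

section
/- For every integer k ≥ 3, there exists a k-graph with the weak Erdős–Szekeres property having exactly C((k−1)²+1, k) − C((k−1)²−1, k−1) edges; that is, f_wES(k) ≤ C((k−1)²+1, k) − C((k−1)²−1, k−1), where C(n, m) denotes the binomial coefficient. -/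
/-!
Take the vertices `0, 1, …, m` with `m = (k - 1)²` in their natural order, and as edges all
`k`-sets except those containing `0` but not `1`; there are `C(m - 1, k - 1)` of the latter.
Let `τ` be another order. If `τ` is monotone on some `k`-set of `{1, …, m}`, that set is an edge.
Otherwise, label each `i ≥ 1` by the lengths of the longest `τ`-increasing and `τ`-decreasing
chains in `{1, …, m}` starting at `i`. As in the Erdős–Szekeres argument, these labels are
distinct and lie in `[1, k - 1]²`, a set of size `m`, so every label occurs; the label
`(k - 1, k - 1)` can only belong to the least vertex `1`. Prepending `0` to the increasing or to
the decreasing chain from `1`, according to how `τ` compares `0` and `1`, gives a monotone edge.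
-/

open Finset OrderDual

section Chains

variable {ι α : Type*} [LinearOrder ι] [LinearOrder α]

lemma StrictMonoOn.insert_of_isLeast {f : ι → α} {s : Set ι} {a b : ι} (hf : StrictMonoOn f s)
    (hb : IsLeast s b) (hab : a < b) (hfab : f a < f b) : StrictMonoOn f (insert a s) := by
  rw [strictMonoOn_insert_iff_of_forall_ge fun x hx => hab.le.trans (hb.2 hx)]
  exact ⟨fun x hx _ => hfab.trans_le (hf.monotoneOn hb.1 hx (hb.2 hx)), hf⟩

open Classical in
noncomputable def chainsFrom (g : ι → α) (s : Finset ι) (i : ι) : Finset (Finset ι) :=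
  {t ∈ s.powerset | IsLeast (t : Set ι) i ∧ StrictMonoOn g t}

noncomputable def longestChainFrom (g : ι → α) (s : Finset ι) (i : ι) : ℕ :=
  (chainsFrom g s i).sup card

variable {g : ι → α} {s t : Finset ι} {i j : ι} {r q : ℕ}

lemma mem_chainsFrom :
    t ∈ chainsFrom g s i ↔ t ⊆ s ∧ IsLeast (t : Set ι) i ∧ StrictMonoOn g t := by
  simp [chainsFrom]

lemma singleton_mem_chainsFrom (hi : i ∈ s) : {i} ∈ chainsFrom g s i :=
  mem_chainsFrom.2 ⟨singleton_subset_iff.2 hi, by simp, by simp⟩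

lemma exists_card_eq_longestChainFrom (hi : i ∈ s) :
    ∃ t ∈ chainsFrom g s i, t.card = longestChainFrom g s i := by
  obtain ⟨t, ht, h⟩ := exists_mem_eq_sup _ ⟨_, singleton_mem_chainsFrom (g := g) hi⟩ card
  exact ⟨t, ht, h.symm⟩

lemma one_le_longestChainFrom (hi : i ∈ s) : 1 ≤ longestChainFrom g s i :=
  le_sup (f := card) (singleton_mem_chainsFrom hi)

lemma longestChainFrom_le (h : ∀ t ⊆ s, StrictMonoOn g t → t.card ≤ r) :
    longestChainFrom g s i ≤ r :=
  Finset.sup_le fun t ht => h t (mem_chainsFrom.1 ht).1 (mem_chainsFrom.1 ht).2.2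

lemma longestChainFrom_lt_of_lt (hi : i ∈ s) (hj : j ∈ s) (hij : i < j) (hg : g i < g j) :
    longestChainFrom g s j < longestChainFrom g s i := by
  obtain ⟨t, ht, hcard⟩ := exists_card_eq_longestChainFrom (g := g) hj
  obtain ⟨hts, hleast, hmono⟩ := mem_chainsFrom.1 ht
  have hit : i ∉ t := fun hit => (hleast.2 hit).not_gt hij
  have hleast' : IsLeast (insert i t : Set ι) i :=
    ⟨Set.mem_insert i _, fun x hx => (Set.mem_insert_iff.1 hx).elim (·.ge)
      fun hx => (hij.trans_le (hleast.2 hx)).le⟩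
  have hchain : insert i t ∈ chainsFrom g s i := by
    refine mem_chainsFrom.2 ⟨insert_subset hi hts, ?_, ?_⟩ <;> rw [coe_insert]
    · exact hleast'
    · exact hmono.insert_of_isLeast hleast hij hg
  calc longestChainFrom g s j < (insert i t).card := by rw [card_insert_of_notMem hit, hcard]; omega
    _ ≤ longestChainFrom g s i := le_sup hchain

lemma injOn_longestChainFrom_pair (hg : Set.InjOn g s) :
    Set.InjOn (fun i => (longestChainFrom g s i, longestChainFrom (toDual ∘ g) s i)) s := by
  intro i hi j hj hij
  simp only [Prod.mk.injEq] at hij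
  by_contra hne
  wlog hlt : i < j generalizing i j
  · exact this hj hi ⟨hij.1.symm, hij.2.symm⟩ (Ne.symm hne)
      (lt_of_le_of_ne (not_lt.1 hlt) (Ne.symm hne))
  rcases lt_or_gt_of_ne (hg.ne hi hj hne) with h | h
  · exact (longestChainFrom_lt_of_lt hi hj hlt h).ne' hij.1
  · exact (longestChainFrom_lt_of_lt (g := toDual ∘ g) hi hj hlt (toDual_lt_toDual.2 h)).ne' hij.2

theorem longestChainFrom_eq_of_card_eq_mul (hg : Set.InjOn g s) (hs : s.card = r * q)
    (hinc : ∀ t ⊆ s, StrictMonoOn g t → t.card ≤ r)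
    (hdec : ∀ t ⊆ s, StrictAntiOn g t → t.card ≤ q) (hi : IsLeast (s : Set ι) i) :
    longestChainFrom g s i = r ∧ longestChainFrom (toDual ∘ g) s i = q := by
  have hdec' (t) (hts : t ⊆ s) (ht : StrictMonoOn (toDual ∘ g) t) : t.card ≤ q :=
    hdec t hts (strictMonoOn_toDual_comp_iff.1 ht)
  have hr := (one_le_longestChainFrom (g := g) hi.1).trans (longestChainFrom_le hinc)
  have hq := (one_le_longestChainFrom (g := toDual ∘ g) hi.1).trans (longestChainFrom_le hdec')
  have hsurj := surjOn_of_injOn_of_card_le _ (t := Icc 1 r ×ˢ Icc 1 q)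
    (fun i hi => by
      simp [one_le_longestChainFrom hi, longestChainFrom_le hinc, longestChainFrom_le hdec'])
    (injOn_longestChainFrom_pair hg) (by simp [hs])
  obtain ⟨p, hp, hpi⟩ := hsurj (by simp [hr, hq] : (r, q) ∈ Icc 1 r ×ˢ Icc 1 q)
  simp only [Prod.mk.injEq] at hpi
  obtain rfl : i = p := by
    by_contra hne
    have hlt := lt_of_le_of_ne (hi.2 hp) hne
    rcases lt_or_gt_of_ne (hg.ne hi.1 hp hne) with h | h
    · have := longestChainFrom_lt_of_lt hi.1 hp hlt h
      have := longestChainFrom_le hinc (i := i)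
      omega
    · have := longestChainFrom_lt_of_lt (g := toDual ∘ g) hi.1 hp hlt (toDual_lt_toDual.2 h)
      have := longestChainFrom_le hdec' (i := i)
      omega
  exact hpi

theorem exists_chains_of_card_eq_mul (hg : Set.InjOn g s) (hs : s.card = r * q)
    (hinc : ∀ t ⊆ s, StrictMonoOn g t → t.card ≤ r)
    (hdec : ∀ t ⊆ s, StrictAntiOn g t → t.card ≤ q) (hi : IsLeast (s : Set ι) i) :
    (∃ t ⊆ s, IsLeast (t : Set ι) i ∧ t.card = r ∧ StrictMonoOn g t) ∧
      ∃ t ⊆ s, IsLeast (t : Set ι) i ∧ t.card = q ∧ StrictAntiOn g t := by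
  obtain ⟨hr, hq⟩ := longestChainFrom_eq_of_card_eq_mul hg hs hinc hdec hi
  obtain ⟨t₁, ht₁, hcard₁⟩ := exists_card_eq_longestChainFrom (g := g) hi.1
  obtain ⟨t₂, ht₂, hcard₂⟩ := exists_card_eq_longestChainFrom (g := toDual ∘ g) hi.1
  obtain ⟨hts₁, hleast₁, hmono₁⟩ := mem_chainsFrom.1 ht₁
  obtain ⟨hts₂, hleast₂, hmono₂⟩ := mem_chainsFrom.1 ht₂
  exact ⟨⟨t₁, hts₁, hleast₁, hcard₁.trans hr, hmono₁⟩,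
    ⟨t₂, hts₂, hleast₂, hcard₂.trans hq, strictMonoOn_toDual_comp_iff.1 hmono₂⟩⟩

end Chains

section Counting

variable {α : Type*} [DecidableEq α]

lemma card_filter_mem_and_notMem_powersetCard {U : Finset α} {a b : α} (ha : a ∈ U) (hb : b ∈ U)
    (hab : a ≠ b) (k : ℕ) :
    #{e ∈ U.powersetCard (k + 1) | a ∈ e ∧ b ∉ e} = (#U - 2).choose k := by
  have hU : #((U.erase a).erase b) = #U - 2 := by
    rw [card_erase_of_mem (mem_erase.2 ⟨hab.symm, hb⟩), card_erase_of_mem ha]; omega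
  rw [← hU, ← card_powersetCard]
  refine card_nbij' (·.erase a) (insert a) ?_ ?_ ?_ ?_
  · intro e he
    simp only [coe_filter, mem_powersetCard, Set.mem_ofPred_eq, mem_coe] at he ⊢
    refine ⟨fun x hx => ?_, by rw [card_erase_of_mem he.2.1, he.1.2]; rfl⟩
    grind
  · intro e he
    simp only [coe_filter, mem_powersetCard, Set.mem_ofPred_eq, mem_coe] at he ⊢
    grind
  · intro e he
    simp only [coe_filter, mem_powersetCard, Set.mem_ofPred_eq] at he ⊢
    exact insert_erase he.2.1
  · intro e he
    simp only [mem_coe, mem_powersetCard] at he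
    exact erase_insert fun h => by simpa using he.1 h

lemma card_filter_mem_imp_mem_powersetCard {U : Finset α} {a b : α} (ha : a ∈ U) (hb : b ∈ U)
    (hab : a ≠ b) (k : ℕ) :
    #{e ∈ U.powersetCard (k + 1) | a ∈ e → b ∈ e} = (#U).choose (k + 1) - (#U - 2).choose k := by
  have hsplit := card_filter_add_card_filter_not (s := U.powersetCard (k + 1))
    fun e => a ∈ e → b ∈ e
  simp only [Classical.not_imp, card_powersetCard] at hsplit
  rw [← card_filter_mem_and_notMem_powersetCard ha hb hab]
  omega

end Counting

def wesEdges (m k : ℕ) : Finset (Finset (Fin (m + 1))) :=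
  {e ∈ univ.powersetCard k | 0 ∈ e → 1 ∈ e}

section Construction

variable {m k : ℕ}

lemma mem_wesEdges {e : Finset (Fin (m + 1))} :
    e ∈ wesEdges m k ↔ e.card = k ∧ (0 ∈ e → 1 ∈ e) := by
  simp [wesEdges]

lemma card_wesEdges (hm : 1 ≤ m) (hk : 1 ≤ k) :
    #(wesEdges m k) = (m + 1).choose k - (m - 1).choose (k - 1) := by
  obtain ⟨m, rfl⟩ := Nat.exists_eq_add_of_le' hm
  obtain ⟨k, rfl⟩ := Nat.exists_eq_add_of_le' hk
  simpa [wesEdges] using card_filter_mem_imp_mem_powersetCard (mem_univ (0 : Fin (m + 2)))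
    (mem_univ 1) zero_ne_one k

lemma insert_zero_mem_wesEdges {t : Finset (Fin (m + 1))} (ht : t ⊆ Ioi 0) (h1 : 1 ∈ t)
    (hcard : t.card + 1 = k) : insert 0 t ∈ wesEdges m k :=
  mem_wesEdges.2 ⟨by rw [card_insert_of_notMem fun h0 => by simpa using ht h0, hcard],
    fun _ => mem_insert_of_mem h1⟩

theorem exists_strictMonoOn_or_strictAntiOn_mem_wesEdges {α : Type*} [LinearOrder α]
    (hk : 2 ≤ k) {τ : Fin ((k - 1) ^ 2 + 1) → α} (hτ : Function.Injective τ) :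
    ∃ e ∈ wesEdges ((k - 1) ^ 2) k, StrictMonoOn τ e ∨ StrictAntiOn τ e := by
  set s : Finset (Fin ((k - 1) ^ 2 + 1)) := Ioi 0
  by_cases hbig : ∃ t ⊆ s, (StrictMonoOn τ t ∨ StrictAntiOn τ t) ∧ k ≤ t.card
  · obtain ⟨t, hts, hτt, hkt⟩ := hbig
    obtain ⟨e, het, hcard⟩ := exists_subset_card_eq hkt
    refine ⟨e, mem_wesEdges.2 ⟨hcard, fun h0 => absurd (hts (het h0)) (by simp [s])⟩, ?_⟩
    exact hτt.imp (·.mono (coe_subset.2 het)) (·.mono (coe_subset.2 het))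
  push Not at hbig
  have : NeZero ((k - 1) ^ 2) := ⟨pow_ne_zero 2 (by omega)⟩
  have hs : s.card = (k - 1) * (k - 1) := by simp [s, sq]
  have h1 : IsLeast (s : Set (Fin ((k - 1) ^ 2 + 1))) 1 :=
    ⟨by simp [s], fun x hx => Fin.one_le_of_ne_zero (by simpa [s] using hx)⟩
  obtain ⟨⟨t₁, hts₁, hleast₁, hcard₁, hmono₁⟩, ⟨t₂, hts₂, hleast₂, hcard₂, hanti₂⟩⟩ :=
    exists_chains_of_card_eq_mul hτ.injOn hs
      (fun t hts h => Nat.le_sub_one_of_lt (hbig t hts (.inl h)))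
      (fun t hts h => Nat.le_sub_one_of_lt (hbig t hts (.inr h))) h1
  rcases lt_or_gt_of_ne (hτ.ne Fin.one_pos'.ne) with h | h
  · refine ⟨insert 0 t₁, insert_zero_mem_wesEdges hts₁ hleast₁.1 (by omega), .inl ?_⟩
    rw [coe_insert]
    exact hmono₁.insert_of_isLeast hleast₁ Fin.one_pos' h
  · refine ⟨insert 0 t₂, insert_zero_mem_wesEdges hts₂ hleast₂.1 (by omega), .inr ?_⟩
    rw [coe_insert, ← strictMonoOn_toDual_comp_iff]
    exact (strictMonoOn_toDual_comp_iff.2 hanti₂).insert_of_isLeast hleast₂ Fin.one_pos'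
      (toDual_lt_toDual.2 h)

end Construction

/-- For every integer `k ≥ 3`, there exists a `k`-graph with the weak
Erdős–Szekeres property having exactly `C((k−1)²+1, k) − C((k−1)²−1, k−1)` edges;
that is, `f_wES(k) ≤ C((k−1)²+1, k) − C((k−1)²−1, k−1)`. -/
theorem stmt_5 (k : ℕ) (hk : 3 ≤ k) :
    ∃ (n : ℕ) (E : Finset (Finset (Fin n))),
      (∀ e ∈ E, e.card = k) ∧
      (∃ σ : Fin n → ℕ, Function.Injective σ ∧
        ∀ τ : Fin n → ℕ, Function.Injective τ →
          ∃ e ∈ E, (∀ x ∈ e, ∀ y ∈ e, σ x < σ y → τ x < τ y) ∨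
                   (∀ x ∈ e, ∀ y ∈ e, σ x < σ y → τ y < τ x)) ∧
      E.card = Nat.choose ((k - 1) ^ 2 + 1) k - Nat.choose ((k - 1) ^ 2 - 1) (k - 1) := by
  refine ⟨(k - 1) ^ 2 + 1, wesEdges ((k - 1) ^ 2) k, fun e he => (mem_wesEdges.1 he).1,
    ⟨Fin.val, Fin.val_injective,
      fun _ hτ => exists_strictMonoOn_or_strictAntiOn_mem_wesEdges (by omega) hτ⟩,
    card_wesEdges (Nat.one_le_pow _ _ (by omega)) (by omega)⟩
end

section
/- For every ε > 0 there exists k₀ such that for all integers k ≥ k₀ there exists a linear k-graph with the strong Erdős–Szekeres property having at most (1+ε)·16k⁸(ln k)²·C((k−1)²+1, k)² edges, where C(n, m) denotes the binomial coefficient; that is, f'_sES(k) ≤ (1+o(1))·16k⁸ ln²k·C((k−1)²+1, k)². -/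
open scoped Classical

/-!
Take the grid `Fin N × 𝔽_p` with `N = (k - 1)² + 1` and put one edge, a `k`-subset of its `N`
points, on every non-vertical line `y = s x + t`; distinct lines meet at most once, so the
hypergraph is linear. By Erdős–Szekeres, every pair of orderings of the grid is monotonically
consistent on some `k`-subset of each line, so a uniformly random choice of the edges fails for a
fixed pair of orderings with probability at most `(1 - 1/C) ^ p²`, where `C = N.choose k`. A union
bound over the `(N p)!²` pairs of orderings succeeds once `p > 2 N C log (N p)`, and Bertrand's
postulate provides such a prime with `p² ≤ 16 k⁸ (log k)² C²`.
-/

open Function Finset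

namespace StrongES

section Consistency

variable {V W α β : Type*} [LinearOrder α] [LinearOrder β]

def MonotoneConsistent (σ : V → α) (τ : V → β) (e : Finset V) : Prop :=
  (∀ x ∈ e, ∀ y ∈ e, σ x < σ y → τ x < τ y) ∨ (∀ x ∈ e, ∀ y ∈ e, σ x < σ y → τ y < τ x)

theorem MonotoneConsistent.of_lt_iff {α' β' : Type*} [LinearOrder α'] [LinearOrder β']
    {σ : V → α} {τ : V → β} {σ' : V → α'} {τ' : V → β'} {e : Finset V}
    (hσ : ∀ x y, σ x < σ y ↔ σ' x < σ' y) (hτ : ∀ x y, τ x < τ y ↔ τ' x < τ' y)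
    (h : MonotoneConsistent σ τ e) : MonotoneConsistent σ' τ' e := by
  simp only [MonotoneConsistent, ← hσ, ← hτ]
  exact h

theorem monotoneConsistent_image [DecidableEq W] {σ : W → α} {τ : W → β} {v : V → W}
    {s : Finset V} :
    MonotoneConsistent σ τ (s.image v) ↔ MonotoneConsistent (σ ∘ v) (τ ∘ v) s := by
  simp only [MonotoneConsistent, forall_mem_image, comp_apply]

noncomputable def topChains (σ : V → α) (τ : V → β) (s : Finset V) (x : V) :
    Finset (Finset V) :=
  s.powerset.filter fun t => x ∈ t ∧ (∀ y ∈ t, σ y ≤ σ x) ∧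
    ∀ y ∈ t, ∀ z ∈ t, σ y < σ z → τ y < τ z

noncomputable def chainHeight (σ : V → α) (τ : V → β) (s : Finset V) (x : V) : ℕ :=
  (topChains σ τ s x).sup card

variable {σ : V → α} {τ : V → β} {s t : Finset V} {x y : V}

theorem mem_topChains : t ∈ topChains σ τ s x ↔ t ⊆ s ∧ x ∈ t ∧ (∀ y ∈ t, σ y ≤ σ x) ∧
    ∀ y ∈ t, ∀ z ∈ t, σ y < σ z → τ y < τ z := by
  rw [topChains, mem_filter, mem_powerset]

theorem singleton_mem_topChains (hx : x ∈ s) : {x} ∈ topChains σ τ s x := by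
  simp [mem_topChains, hx]

theorem one_le_chainHeight (hx : x ∈ s) : 1 ≤ chainHeight σ τ s x :=
  le_sup_of_le (singleton_mem_topChains (σ := σ) (τ := τ) hx) (card_singleton x).ge

theorem exists_mem_topChains_card_eq (hx : x ∈ s) :
    ∃ t ∈ topChains σ τ s x, #t = chainHeight σ τ s x := by
  obtain ⟨t, ht, heq⟩ :=
    exists_mem_eq_sup (topChains σ τ s x) ⟨{x}, singleton_mem_topChains hx⟩ card
  exact ⟨t, ht, heq.symm⟩

theorem chainHeight_lt_chainHeight (hσ : Set.InjOn σ s) (hx : x ∈ s) (hy : y ∈ s)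
    (hσxy : σ x < σ y) (hτxy : τ x < τ y) : chainHeight σ τ s x < chainHeight σ τ s y := by
  obtain ⟨t, ht, hcard⟩ := exists_mem_topChains_card_eq (σ := σ) (τ := τ) hx
  obtain ⟨hts, hxt, htop, hchain⟩ := mem_topChains.1 ht
  have hlt : ∀ z ∈ t, σ z < σ y := fun z hz => (htop z hz).trans_lt hσxy
  have hyt : y ∉ t := fun hyt => (hlt y hyt).false
  have hτlt : ∀ z ∈ t, τ z < τ y := by
    intro z hz
    rcases (htop z hz).lt_or_eq with h | h
    · exact (hchain z hz x hxt h).trans hτxy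
    · rwa [hσ (hts hz) (hts hxt) h]
  rw [← hcard, Nat.lt_iff_add_one_le, ← card_insert_of_notMem hyt]
  refine le_sup ?_
  simp only [mem_topChains, mem_insert, forall_eq_or_imp, lt_self_iff_false,
    IsEmpty.forall_iff, le_refl, true_and, true_or]
  refine ⟨insert_subset hy hts, fun z hz => (hlt z hz).le, fun z hz h => ?_,
    fun z hz => ⟨fun h => hτlt z hz, hchain z hz⟩⟩
  exact absurd h (hlt z hz).asymm

/-- Erdős–Szekeres: without an increasing chain of length `k`, the chain height takes at most
`k - 1` values, and each of its level sets is decreasing. -/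
theorem exists_monotoneConsistent_of_sq_lt_card (hσ : Set.InjOn σ s) (hτ : Set.InjOn τ s)
    {k : ℕ} (hs : (k - 1) ^ 2 < #s) : ∃ t ⊆ s, #t = k ∧ MonotoneConsistent σ τ t := by
  by_cases hlong : ∃ x ∈ s, k ≤ chainHeight σ τ s x
  · obtain ⟨x, hx, hk⟩ := hlong
    obtain ⟨t, ht, hcard⟩ := exists_mem_topChains_card_eq (σ := σ) (τ := τ) hx
    obtain ⟨hts, -, -, hchain⟩ := mem_topChains.1 ht
    obtain ⟨u, hut, rfl⟩ := exists_subset_card_eq (hcard ▸ hk)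
    exact ⟨u, hut.trans hts, rfl, Or.inl fun y hy z hz => hchain y (hut hy) z (hut hz)⟩
  push Not at hlong
  have hmaps : ∀ x ∈ s, chainHeight σ τ s x ∈ Icc 1 (k - 1) := fun x hx =>
    mem_Icc.2 ⟨one_le_chainHeight hx, Nat.le_sub_one_of_lt (hlong x hx)⟩
  obtain ⟨h, -, hfiber⟩ := exists_lt_card_fiber_of_mul_lt_card_of_maps_to hmaps
    (by simpa [sq] using hs)
  obtain ⟨u, hu, rfl⟩ := exists_subset_card_eq (Nat.le_of_pred_lt hfiber)
  refine ⟨u, hu.trans (filter_subset _ _), rfl, Or.inr fun y hy z hz hσyz => ?_⟩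
  obtain ⟨hys, hyh⟩ := mem_filter.1 (hu hy)
  obtain ⟨hzs, hzh⟩ := mem_filter.1 (hu hz)
  refine (le_of_not_gt fun hτyz => ?_).lt_of_ne fun h =>
    hσyz.ne (congrArg σ (hτ hzs hys h).symm)
  exact (chainHeight_lt_chainHeight hσ hys hzs hσyz hτyz).ne (hyh.trans hzh.symm)

end Consistency

theorem exists_equiv_fin_lt_iff {V α : Type*} [Fintype V] [LinearOrder α] {σ : V → α}
    (hσ : Injective σ) : ∃ ρ : V ≃ Fin (Fintype.card V), ∀ x y, σ x < σ y ↔ ρ x < ρ y := by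
  let _ : LinearOrder V := LinearOrder.lift' σ hσ
  exact ⟨(Fintype.orderIsoFinOfCardEq V rfl).symm.toEquiv, fun x y =>
    (OrderIso.lt_iff_lt (Fintype.orderIsoFinOfCardEq V rfl).symm).symm⟩

/-- The union bound: a uniformly random `F` fails against a fixed `b` with probability at most
`(1 - 1/#A) ^ card ι`. -/
theorem exists_pi_forall_exists_of_card_mul_lt {ι α β : Type*} [Fintype ι] (A : Finset α)
    (P : Finset β) (Good : β → ι → α → Prop) (hgood : ∀ b ∈ P, ∀ i, ∃ a ∈ A, Good b i a)
    (hcard : #P * (#A - 1) ^ Fintype.card ι < #A ^ Fintype.card ι) :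
    ∃ F : ι → α, (∀ i, F i ∈ A) ∧ ∀ b ∈ P, ∃ i, Good b i (F i) := by
  let failures b := Fintype.piFinset fun i => A.filter fun a => ¬ Good b i a
  have hfailures : ∀ b ∈ P, #(failures b) ≤ (#A - 1) ^ Fintype.card ι := by
    intro b hb
    rw [Fintype.card_piFinset, ← Finset.card_univ, ← prod_const]
    refine prod_le_prod' fun i _ => ?_
    obtain ⟨a, ha, hgood⟩ := hgood b hb i
    rw [← card_erase_of_mem ha]
    exact card_le_card fun a' ha' => mem_erase.2
      ⟨fun h => (mem_filter.1 ha').2 (h ▸ hgood), (mem_filter.1 ha').1⟩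
  have hlt : #(P.biUnion failures) < #(Fintype.piFinset fun _ : ι => A) := calc
    #(P.biUnion failures) ≤ ∑ b ∈ P, #(failures b) := card_biUnion_le
    _ ≤ #P * (#A - 1) ^ Fintype.card ι := by
      simpa using sum_le_sum hfailures
    _ < #(Fintype.piFinset fun _ : ι => A) := by simpa using hcard
  obtain ⟨F, hF, hFgood⟩ := exists_mem_notMem_of_card_lt_card hlt
  rw [Fintype.mem_piFinset] at hF
  refine ⟨F, hF, fun b hb => ?_⟩
  by_contra! hbad
  exact hFgood (mem_biUnion.2
    ⟨b, hb, Fintype.mem_piFinset.2 fun i => mem_filter.2 ⟨hF i, hbad i⟩⟩)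

theorem exists_subsets_forall_monotoneConsistent {V Λ X α β : Type*} [Fintype V] [DecidableEq V]
    [Fintype Λ] [Fintype X] [LinearOrder α] [LinearOrder β] (line : Λ → X → V)
    (hline : ∀ ℓ, Injective (line ℓ)) {k : ℕ} (hX : (k - 1) ^ 2 < Fintype.card X)
    (hcount : (Fintype.card V).factorial ^ 2 * ((Fintype.card X).choose k - 1) ^ Fintype.card Λ <
      (Fintype.card X).choose k ^ Fintype.card Λ) :
    ∃ A : Λ → Finset X, (∀ ℓ, #(A ℓ) = k) ∧ ∀ (σ : V → α) (τ : V → β), Injective σ →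
      Injective τ → ∃ ℓ, MonotoneConsistent σ τ ((A ℓ).image (line ℓ)) := by
  let Orders := V ≃ Fin (Fintype.card V)
  have hgood : ∀ ρ ∈ (univ : Finset (Orders × Orders)), ∀ ℓ, ∃ A ∈ powersetCard k univ,
      MonotoneConsistent ρ.1 ρ.2 (A.image (line ℓ)) := by
    intro ρ _ ℓ
    obtain ⟨A, -, hA, hcons⟩ := exists_monotoneConsistent_of_sq_lt_card (s := univ)
      (σ := ρ.1 ∘ line ℓ) (τ := ρ.2 ∘ line ℓ) ((ρ.1.injective.comp (hline ℓ)).injOn)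
      ((ρ.2.injective.comp (hline ℓ)).injOn) (by rwa [card_univ])
    exact ⟨A, mem_powersetCard_univ.2 hA, monotoneConsistent_image.2 hcons⟩
  obtain ⟨A, hAk, hA⟩ := exists_pi_forall_exists_of_card_mul_lt _ _ _ hgood (by
    simpa [Orders, Fintype.card_equiv (Fintype.equivFin V), sq] using hcount)
  refine ⟨A, fun ℓ => mem_powersetCard_univ.1 (hAk ℓ), fun σ τ hσ hτ => ?_⟩
  obtain ⟨ρ₁, hρ₁⟩ := exists_equiv_fin_lt_iff hσ
  obtain ⟨ρ₂, hρ₂⟩ := exists_equiv_fin_lt_iff hτ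
  obtain ⟨ℓ, hℓ⟩ := hA (ρ₁, ρ₂) (mem_univ _)
  exact ⟨ℓ, hℓ.of_lt_iff (fun x y => (hρ₁ x y).symm) fun x y => (hρ₂ x y).symm⟩

structure IsLinearStrongES {V : Type*} [DecidableEq V] (k : ℕ) (E : Finset (Finset V)) :
    Prop where
  card_eq : ∀ e ∈ E, #e = k
  card_inter_le_one : ∀ e ∈ E, ∀ f ∈ E, e ≠ f → #(e ∩ f) ≤ 1
  exists_monotoneConsistent : ∀ σ τ : V → ℕ, Injective σ → Injective τ →
    ∃ e ∈ E, MonotoneConsistent σ τ e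

theorem IsLinearStrongES.map {V W : Type*} [DecidableEq V] [DecidableEq W] {k : ℕ}
    {E : Finset (Finset V)} (hE : IsLinearStrongES k E) (φ : V ≃ W) :
    IsLinearStrongES k (E.map φ.finsetCongr.toEmbedding) := by
  refine ⟨?_, ?_, fun σ τ hσ hτ => ?_⟩
  · simp only [forall_mem_map, Equiv.coe_toEmbedding, Equiv.finsetCongr_apply, card_map]
    exact hE.card_eq
  · simp only [forall_mem_map, Equiv.coe_toEmbedding, Equiv.finsetCongr_apply, ← map_inter,
      card_map, (map_injective _).ne_iff]
    exact hE.card_inter_le_one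
  · obtain ⟨e, he, hcons⟩ := hE.exists_monotoneConsistent (σ ∘ φ) (τ ∘ φ) (hσ.comp φ.injective)
      (hτ.comp φ.injective)
    refine ⟨φ.finsetCongr e, mem_map_of_mem _ he, ?_⟩
    rwa [Equiv.finsetCongr_apply, map_eq_image, Equiv.coe_toEmbedding, monotoneConsistent_image]

section AffineLines

variable {F X : Type*} [CommRing F] (ι : X → F)

def affineLine (ℓ : F × F) (x : X) : X × F := (x, ℓ.1 * ι x + ℓ.2)

theorem affineLine_injective (ℓ : F × F) : Injective (affineLine ι ℓ) :=
  fun _ _ h => congrArg Prod.fst h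

theorem eq_of_affine_eq_affine_of_ne [IsDomain F] {a b : F} (hab : a ≠ b) {ℓ₁ ℓ₂ : F × F}
    (ha : ℓ₁.1 * a + ℓ₁.2 = ℓ₂.1 * a + ℓ₂.2) (hb : ℓ₁.1 * b + ℓ₁.2 = ℓ₂.1 * b + ℓ₂.2) :
    ℓ₁ = ℓ₂ := by
  have hslope : ℓ₁.1 = ℓ₂.1 := by
    have : (ℓ₁.1 - ℓ₂.1) * (a - b) = 0 := by linear_combination ha - hb
    exact sub_eq_zero.1 ((mul_eq_zero.1 this).resolve_right (sub_ne_zero.2 hab))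
  exact Prod.ext hslope (by rw [hslope] at ha; exact add_left_cancel ha)

theorem card_image_affineLine_inter_le_one [IsDomain F] [DecidableEq F] [DecidableEq X]
    (hι : Injective ι) {ℓ₁ ℓ₂ : F × F} (hℓ : ℓ₁ ≠ ℓ₂) (A B : Finset X) :
    #(A.image (affineLine ι ℓ₁) ∩ B.image (affineLine ι ℓ₂)) ≤ 1 := by
  simp only [card_le_one, mem_inter, mem_image]
  rintro _ ⟨⟨a, -, rfl⟩, ⟨a', -, ha⟩⟩ _ ⟨⟨b, -, rfl⟩, ⟨b', -, hb⟩⟩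
  simp only [affineLine, Prod.ext_iff] at ha hb
  obtain ⟨rfl, ha⟩ := ha
  obtain ⟨rfl, hb⟩ := hb
  by_contra hne
  exact hℓ (eq_of_affine_eq_affine_of_ne (fun h => hne (by rw [hι h])) ha.symm hb.symm)

end AffineLines

theorem natCast_fin_injective {N p : ℕ} (hNp : N ≤ p) :
    Injective fun a : Fin N => ((a : ℕ) : ZMod p) := fun a b h => by
  rw [ZMod.natCast_eq_natCast_iff', Nat.mod_eq_of_lt (a.2.trans_le hNp),
    Nat.mod_eq_of_lt (b.2.trans_le hNp)] at h
  exact Fin.ext h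

theorem exists_isLinearStrongES_grid {N p k : ℕ} [Fact p.Prime] (hNp : N ≤ p)
    (hN : (k - 1) ^ 2 < N)
    (hcount : (N * p).factorial ^ 2 * (N.choose k - 1) ^ (p ^ 2) < N.choose k ^ (p ^ 2)) :
    ∃ E : Finset (Finset (Fin N × ZMod p)), IsLinearStrongES k E ∧ #E ≤ p ^ 2 := by
  have hι := natCast_fin_injective hNp
  let line := affineLine fun a : Fin N => ((a : ℕ) : ZMod p)
  obtain ⟨A, hAk, hA⟩ := exists_subsets_forall_monotoneConsistent (α := ℕ) (β := ℕ) line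
    (affineLine_injective _) (by simpa using hN) (by simpa [ZMod.card, sq] using hcount)
  refine ⟨univ.image fun ℓ => (A ℓ).image (line ℓ), ⟨?_, ?_, ?_⟩, ?_⟩
  · simp only [forall_mem_image, mem_univ, true_implies]
    intro ℓ
    rw [card_image_of_injective _ (affineLine_injective _ ℓ), hAk]
  · simp only [forall_mem_image, mem_univ, true_implies]
    intro ℓ₁ ℓ₂ hne
    refine card_image_affineLine_inter_le_one _ hι ?_ _ _
    rintro rfl
    exact hne rfl
  · intro σ τ hσ hτ
    obtain ⟨ℓ, hℓ⟩ := hA σ τ hσ hτ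
    exact ⟨_, mem_image_of_mem _ (mem_univ ℓ), hℓ⟩
  · exact card_image_le.trans (by simp [ZMod.card, sq])

theorem factorial_sq_mul_pow_lt_pow {n C L : ℕ} (hn : 0 < n) (hC : 0 < C)
    (h : 2 * n * Real.log n * C < L) : n.factorial ^ 2 * (C - 1) ^ L < C ^ L := by
  have hC' : (0 : ℝ) < C := by exact_mod_cast hC
  have hC1 : (0 : ℝ) ≤ C - 1 := sub_nonneg.2 (by exact_mod_cast hC)
  have hfac : (n.factorial : ℝ) ^ 2 ≤ Real.exp (2 * n * Real.log n) := calc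
    (n.factorial : ℝ) ^ 2 ≤ ((n : ℝ) ^ n) ^ 2 := by
      gcongr
      exact_mod_cast Nat.factorial_le_pow n
    _ = Real.exp (2 * n * Real.log n) := by
      rw [show 2 * (n : ℝ) * Real.log n = ((2 * n : ℕ) : ℝ) * Real.log n by push_cast; ring,
        Real.exp_nat_mul, Real.exp_log (by exact_mod_cast hn), ← pow_mul, mul_comm]
  have hstep : (C : ℝ) - 1 ≤ C * Real.exp (-(1 / C)) := calc
    (C : ℝ) - 1 = C * (-(1 / C) + 1) := by field_simp; ring
    _ ≤ C * Real.exp (-(1 / C)) := by gcongr; exact Real.add_one_le_exp _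
  have hpow : ((C : ℝ) - 1) ^ L ≤ C ^ L * Real.exp (-(L / C)) := calc
    ((C : ℝ) - 1) ^ L ≤ (C * Real.exp (-(1 / C))) ^ L := pow_le_pow_left₀ hC1 hstep L
    _ = C ^ L * Real.exp (-(L / C)) := by
      rw [mul_pow, ← Real.exp_nat_mul]
      congr 2
      ring
  have hlt : Real.exp (2 * n * Real.log n) * Real.exp (-(L / C)) < 1 := by
    rw [← Real.exp_add, Real.exp_lt_one_iff, add_neg_lt_iff_lt_add, zero_add, lt_div_iff₀ hC']
    exact h
  have key : (n.factorial : ℝ) ^ 2 * ((C : ℝ) - 1) ^ L < C ^ L := calc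
    (n.factorial : ℝ) ^ 2 * ((C : ℝ) - 1) ^ L
        ≤ Real.exp (2 * n * Real.log n) * (C ^ L * Real.exp (-(L / C))) := by gcongr
    _ = C ^ L * (Real.exp (2 * n * Real.log n) * Real.exp (-(L / C))) := by ring
    _ < C ^ L := mul_lt_of_lt_one_right (by positivity) hlt
  rw [← Nat.cast_lt (α := ℝ)]
  push_cast [Nat.cast_sub hC]
  exact key

theorem two_le_log_of_eight_le {k : ℕ} (hk : 8 ≤ k) : 2 ≤ Real.log k := by
  rw [Real.le_log_iff_exp_le (by positivity)]
  have h8 : (8 : ℝ) ≤ k := by exact_mod_cast hk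
  have : Real.exp 2 = Real.exp 1 ^ 2 := by rw [← Real.exp_nat_mul]; norm_num
  nlinarith [Real.exp_one_lt_d9, Real.exp_pos 1]

theorem eight_mul_pow_six_le_two_pow_sq {k : ℕ} (hk : 7 ≤ k) : 8 * k ^ 6 ≤ 2 ^ k ^ 2 := calc
  8 * k ^ 6 ≤ 8 * (2 ^ k) ^ 6 := by gcongr; exact Nat.lt_two_pow_self.le
  _ = 2 ^ (6 * k + 3) := by ring
  _ ≤ 2 ^ k ^ 2 := Nat.pow_le_pow_right two_pos (by nlinarith)

/-- With `N = (k - 1)² + 1` and `C = N.choose k`, Bertrand's postulate gives a prime `p` in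
`(4 N C k², 8 N C k²]`; then `log (N p) ≤ 2 k²` and `p² ≤ 64 k⁸ C² ≤ 16 k⁸ (log k)² C²`. -/
theorem exists_prime_union_bound {k : ℕ} (hk : 8 ≤ k) :
    ∃ p, p.Prime ∧ (k - 1) ^ 2 + 1 ≤ p ∧
      (((k - 1) ^ 2 + 1) * p).factorial ^ 2 * (((k - 1) ^ 2 + 1).choose k - 1) ^ (p ^ 2) <
        ((k - 1) ^ 2 + 1).choose k ^ (p ^ 2) ∧
      (p : ℝ) ^ 2 ≤ 16 * (k : ℝ) ^ 8 * Real.log k ^ 2 * (((k - 1) ^ 2 + 1).choose k : ℝ) ^ 2 := by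
  set N := (k - 1) ^ 2 + 1
  set C := N.choose k
  have hNk : N ≤ k ^ 2 := by
    have : (k - 1) ^ 2 < k ^ 2 := Nat.pow_lt_pow_left (by omega) two_ne_zero
    omega
  have hkN : k ≤ N := by
    have : k - 1 ≤ (k - 1) ^ 2 := Nat.le_self_pow two_ne_zero _
    omega
  have hC : 0 < C := Nat.choose_pos hkN
  obtain ⟨p, hp, hmp, hpm⟩ := Nat.exists_prime_lt_and_le_two_mul (4 * N * C * k ^ 2)
    (by positivity)
  have hNp : N * p ≤ 4 ^ k ^ 2 := calc
    N * p ≤ N * (2 * (4 * N * C * k ^ 2)) := by gcongr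
    _ = 8 * k ^ 2 * N ^ 2 * C := by ring
    _ ≤ 8 * k ^ 2 * (k ^ 2) ^ 2 * 2 ^ k ^ 2 := by
      gcongr
      exact (Nat.choose_le_two_pow N k).trans (Nat.pow_le_pow_right two_pos hNk)
    _ = 8 * k ^ 6 * 2 ^ k ^ 2 := by ring
    _ ≤ 2 ^ k ^ 2 * 2 ^ k ^ 2 := by gcongr; exact eight_mul_pow_six_le_two_pow_sq (by omega)
    _ = 4 ^ k ^ 2 := by rw [← mul_pow]; norm_num
  have hlog : Real.log ((N * p : ℕ) : ℝ) ≤ 2 * k ^ 2 := calc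
    Real.log ((N * p : ℕ) : ℝ) ≤ Real.log ((4 ^ k ^ 2 : ℕ) : ℝ) :=
      Real.log_le_log (by exact_mod_cast Nat.mul_pos (by omega) hp.pos) (by exact_mod_cast hNp)
    _ = k ^ 2 * (2 * Real.log 2) := by
      rw [Nat.cast_pow, Real.log_pow, show ((4 : ℕ) : ℝ) = 2 ^ 2 by norm_num, Real.log_pow]
      push_cast
      ring
    _ ≤ 2 * k ^ 2 := by
      nlinarith [Real.log_le_sub_one_of_pos (show (0 : ℝ) < 2 by norm_num)]
  have hNm : N ≤ 4 * N * C * k ^ 2 := calc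
    N ≤ N * (4 * C * k ^ 2) := Nat.le_mul_of_pos_right N (by positivity)
    _ = 4 * N * C * k ^ 2 := by ring
  refine ⟨p, hp, hNm.trans hmp.le,
    factorial_sq_mul_pow_lt_pow (Nat.mul_pos (by omega) hp.pos) hC ?_, ?_⟩
  · calc 2 * ((N * p : ℕ) : ℝ) * Real.log ((N * p : ℕ) : ℝ) * C
        ≤ 2 * ((N * p : ℕ) : ℝ) * (2 * k ^ 2) * C := by gcongr
      _ = ((4 * N * C * k ^ 2 : ℕ) : ℝ) * p := by push_cast; ring
      _ < p * p := mul_lt_mul_of_pos_right (by exact_mod_cast hmp) (by exact_mod_cast hp.pos)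
      _ = ((p ^ 2 : ℕ) : ℝ) := by push_cast; ring
  · have hlogk := two_le_log_of_eight_le hk
    have hpk : (p : ℝ) ≤ 4 * k ^ 4 * Real.log k * C := calc
      (p : ℝ) ≤ 2 * (4 * N * C * k ^ 2) := by exact_mod_cast hpm
      _ ≤ 2 * (4 * k ^ 2 * C * k ^ 2) := by gcongr; exact_mod_cast hNk
      _ = 4 * k ^ 4 * 2 * C := by ring
      _ ≤ 4 * k ^ 4 * Real.log k * C := by gcongr
    calc (p : ℝ) ^ 2 ≤ (4 * k ^ 4 * Real.log k * C) ^ 2 := by gcongr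
      _ = 16 * k ^ 8 * Real.log k ^ 2 * C ^ 2 := by ring

end StrongES

open StrongES

/-- For every `ε > 0` there exists `k₀` such that for all `k ≥ k₀`
there exists a linear `k`-graph with the strong Erdős–Szekeres property having at most
`(1+ε)·16k⁸(ln k)²·C((k−1)²+1, k)²` edges; that is,
`f'_sES(k) ≤ (1+o(1))·16k⁸ ln²k·C((k−1)²+1, k)²`. -/
theorem stmt_7 :
    ∀ ε : ℝ, 0 < ε → ∃ k₀ : ℕ, ∀ k : ℕ, k₀ ≤ k →
      ∃ (n : ℕ) (E : Finset (Finset (Fin n))),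
        (∀ e ∈ E, e.card = k) ∧
        (∀ e ∈ E, ∀ f ∈ E, e ≠ f → (e ∩ f).card ≤ 1) ∧
        (∀ σ τ : Fin n → ℕ, Function.Injective σ → Function.Injective τ →
          ∃ e ∈ E, (∀ x ∈ e, ∀ y ∈ e, σ x < σ y → τ x < τ y) ∨
                   (∀ x ∈ e, ∀ y ∈ e, σ x < σ y → τ y < τ x)) ∧
        (E.card : ℝ) ≤ (1 + ε) * 16 * (k : ℝ) ^ 8 * Real.log k ^ 2 *
          (Nat.choose ((k - 1) ^ 2 + 1) k : ℝ) ^ 2 := by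
  intro ε hε
  refine ⟨8, fun k hk => ?_⟩
  obtain ⟨p, hp, hNp, hcount, hpk⟩ := exists_prime_union_bound hk
  have := Fact.mk hp
  obtain ⟨E, hE, hEcard⟩ := exists_isLinearStrongES_grid hNp (Nat.lt_succ_self _) hcount
  have hEfin := hE.map (Fintype.equivFin _)
  refine ⟨_, _, hEfin.card_eq, hEfin.card_inter_le_one, hEfin.exists_monotoneConsistent, ?_⟩
  have hbound : 0 ≤ 16 * (k : ℝ) ^ 8 * Real.log k ^ 2 * (((k - 1) ^ 2 + 1).choose k : ℝ) ^ 2 := by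
    positivity
  calc (#(E.map _) : ℝ) = #E := by rw [card_map]
    _ ≤ p ^ 2 := by exact_mod_cast hEcard
    _ ≤ 16 * (k : ℝ) ^ 8 * Real.log k ^ 2 * (((k - 1) ^ 2 + 1).choose k : ℝ) ^ 2 := hpk
    _ ≤ _ := by nlinarith
end

section
/- For every integer k ≥ 2, the minimum number of vertices in a k-graph with the weak Erdős–Szekeres property equals (k−1)²+1, and the same holds for the strong Erdős–Szekeres property: there is a k-graph on (k−1)²+1 vertices with the strong Erdős–Szekeres property, while no k-graph on at most (k−1)² vertices has even the weak Erdős–Szekeres property. That is, n_wES(k) = n_sES(k) = (k−1)²+1. -/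
/-!
Upper bound: the complete `k`-graph on `(k-1)² + 1` vertices works, by the Erdős–Szekeres
argument. Label each vertex by the size of the longest chain below it in the product order of `σ`
and `τ`; a label above `k-1` yields `k` vertices on which `τ` agrees with `σ`, and otherwise some
label class has `k` vertices, and on a label class `τ` reverses `σ`.

Lower bound: given `σ` on at most `(k-1)²` vertices, cut the `σ`-order into at most `k-1`
consecutive blocks of at most `k-1` vertices, and let `τ` list the blocks in reverse order while
keeping the order inside each block. A set on which `τ` agrees with `σ` lies in one block, and a
set on which it reverses `σ` meets each block at most once.
-/

open Function Finset OrderDual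

variable {V α β : Type*} [LinearOrder α] [LinearOrder β]

def SameOrderOn (σ : V → α) (τ : V → β) (e : Finset V) : Prop :=
  ∀ x ∈ e, ∀ y ∈ e, σ x < σ y → τ x < τ y

def ReverseOrderOn (σ : V → α) (τ : V → β) (e : Finset V) : Prop :=
  ∀ x ∈ e, ∀ y ∈ e, σ x < σ y → τ y < τ x

theorem SameOrderOn.mono {σ : V → α} {τ : V → β} {e e' : Finset V} (h : SameOrderOn σ τ e)
    (he : e' ⊆ e) : SameOrderOn σ τ e' :=
  fun x hx y hy => h x (he hx) y (he hy)

theorem ReverseOrderOn.mono {σ : V → α} {τ : V → β} {e e' : Finset V}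
    (h : ReverseOrderOn σ τ e) (he : e' ⊆ e) : ReverseOrderOn σ τ e' :=
  fun x hx y hy => h x (he hx) y (he hy)

section ErdosSzekeres

variable [Fintype V] (σ : V → α) (τ : V → β)

open Classical in
noncomputable def chainsBelow (x : V) : Finset (Finset V) :=
  {c | SameOrderOn σ τ c ∧ ∀ a ∈ c, σ a ≤ σ x ∧ τ a ≤ τ x}

noncomputable def chainHeight (x : V) : ℕ :=
  (chainsBelow σ τ x).sup card

variable {σ τ}

@[simp]
theorem mem_chainsBelow {x : V} {c : Finset V} :
    c ∈ chainsBelow σ τ x ↔ SameOrderOn σ τ c ∧ ∀ a ∈ c, σ a ≤ σ x ∧ τ a ≤ τ x := by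
  simp [chainsBelow]

theorem card_le_chainHeight {x : V} {c : Finset V} (hc : SameOrderOn σ τ c)
    (hbelow : ∀ a ∈ c, σ a ≤ σ x ∧ τ a ≤ τ x) : #c ≤ chainHeight σ τ x :=
  le_sup (f := card) (mem_chainsBelow.2 ⟨hc, hbelow⟩)

theorem exists_sameOrderOn_card_eq_chainHeight (x : V) :
    ∃ c : Finset V, SameOrderOn σ τ c ∧ (∀ a ∈ c, σ a ≤ σ x ∧ τ a ≤ τ x) ∧
      #c = chainHeight σ τ x := by
  obtain ⟨c, hc, hsup⟩ :=
    exists_mem_eq_sup (chainsBelow σ τ x) ⟨∅, by simp [SameOrderOn]⟩ card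
  exact ⟨c, (mem_chainsBelow.1 hc).1, (mem_chainsBelow.1 hc).2, hsup.symm⟩

theorem one_le_chainHeight (x : V) : 1 ≤ chainHeight σ τ x :=
  card_le_chainHeight (c := {x}) (by simp [SameOrderOn]) (by simp)

theorem chainHeight_lt_chainHeight {x y : V} (hσ : σ x < σ y) (hτ : τ x < τ y) :
    chainHeight σ τ x < chainHeight σ τ y := by
  classical
  obtain ⟨c, hc, hbelow, hcard⟩ := exists_sameOrderOn_card_eq_chainHeight (σ := σ) (τ := τ) x
  have hy : y ∉ c := fun hy => (hbelow y hy).1.not_gt hσ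
  have hchain : SameOrderOn σ τ (insert y c) := by
    simp only [SameOrderOn, mem_insert, forall_eq_or_imp]
    refine ⟨⟨fun h => (lt_irrefl _ h).elim, fun b hb h => ?_⟩, fun a ha => ⟨fun _ => ?_, hc a ha⟩⟩
    · exact ((hbelow b hb).1.trans_lt hσ |>.trans h |>.false).elim
    · exact (hbelow a ha).2.trans_lt hτ
  have hbelow' : ∀ a ∈ insert y c, σ a ≤ σ y ∧ τ a ≤ τ y := by
    simp only [mem_insert, forall_eq_or_imp, le_refl, true_and]
    exact fun a ha => ⟨(hbelow a ha).1.trans hσ.le, (hbelow a ha).2.trans hτ.le⟩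
  calc chainHeight σ τ x = #c := hcard.symm
    _ < #(insert y c) := by rw [card_insert_of_notMem hy]; omega
    _ ≤ chainHeight σ τ y := card_le_chainHeight hchain hbelow'

theorem exists_sameOrderOn_or_reverseOrderOn (hτ : Injective τ) {r s : ℕ}
    (h : r * s < Fintype.card V) :
    ∃ e : Finset V, r < #e ∧ SameOrderOn σ τ e ∨ s < #e ∧ ReverseOrderOn σ τ e := by
  classical
  by_cases htall : ∃ x, r < chainHeight σ τ x
  · obtain ⟨x, hx⟩ := htall
    obtain ⟨c, hc, -, hcard⟩ := exists_sameOrderOn_card_eq_chainHeight (σ := σ) (τ := τ) x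
    exact ⟨c, .inl ⟨hcard ▸ hx, hc⟩⟩
  push Not at htall
  obtain ⟨i, -, hfiber⟩ := exists_lt_card_fiber_of_mul_lt_card_of_maps_to (s := univ)
    (t := Icc 1 r) (f := chainHeight σ τ)
    (fun x _ => mem_Icc.2 ⟨one_le_chainHeight x, htall x⟩) (by simpa using h)
  refine ⟨_, .inr ⟨hfiber, fun x hx y hy hxy => ?_⟩⟩
  simp only [mem_filter, mem_univ, true_and] at hx hy
  have hne : τ x ≠ τ y := hτ.ne fun h => hxy.ne (congrArg σ h)
  exact hne.lt_or_gt.resolve_left fun hτxy =>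
    (chainHeight_lt_chainHeight hxy hτxy).ne (hx.trans hy.symm)

end ErdosSzekeres

theorem exists_rank [Fintype V] (g : V → β) :
    ∃ r : V → ℕ, (∀ x y, r x < r y ↔ g x < g y) ∧ ∀ x, r x < Fintype.card V := by
  classical
  let e := (univ.image g).orderIsoOfFin rfl
  refine ⟨fun x => e.symm ⟨g x, mem_image_of_mem g (mem_univ x)⟩, fun x y => ?_, fun x => ?_⟩
  · simp only [Fin.val_fin_lt, OrderIso.lt_iff_lt, Subtype.mk_lt_mk]
  · exact (Fin.is_lt _).trans_le card_image_le

theorem injective_of_lt_iff_lt {r : V → α} {g : V → β} (hr : ∀ x y, r x < r y ↔ g x < g y)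
    (hg : Injective g) : Injective r := by
  intro x y h
  by_contra hne
  rcases (hg.ne hne).lt_or_gt with hlt | hlt
  · exact ((hr x y).2 hlt).ne h
  · exact ((hr y x).2 hlt).ne h.symm

theorem exists_injective_forall_card_le [Fintype V] {σ : V → α} (hσ : Injective σ) {m : ℕ}
    (hV : Fintype.card V ≤ m * m) :
    ∃ τ : V → ℕ, Injective τ ∧
      ∀ e : Finset V, SameOrderOn σ τ e ∨ ReverseOrderOn σ τ e → #e ≤ m := by
  obtain ⟨r, hr, hrV⟩ := exists_rank σ
  have hrinj : Injective r := injective_of_lt_iff_lt hr hσ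
  set q : V → ℕ := fun x => r x / m
  have hqm : ∀ x, q x < m := fun x => Nat.div_lt_of_lt_mul ((hrV x).trans_le hV)
  have hq_mono : ∀ x y, σ x < σ y → q x ≤ q y :=
    fun x y h => Nat.div_le_div_right ((hr x y).2 h).le
  let g : V → ℕᵒᵈ ×ₗ α := fun x => toLex (toDual (q x), σ x)
  have hg : Injective g := fun x y h => hσ (congrArg Prod.snd (toLex.injective h))
  obtain ⟨τ, hτ, -⟩ := exists_rank g
  have hτ_lt_iff : ∀ x y, σ x < σ y → (τ x < τ y ↔ q x = q y) := by
    intro x y hxy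
    rw [hτ, Prod.Lex.toLex_lt_toLex]
    simp only [toDual_lt_toDual, EmbeddingLike.apply_eq_iff_eq, hxy, and_true]
    have := hq_mono x y hxy
    omega
  refine ⟨τ, injective_of_lt_iff_lt hτ hg, fun e he => ?_⟩
  rcases he with hsame | hrev
  · have hq_eq : ∀ x ∈ e, ∀ y ∈ e, q x = q y := by
      intro x hx y hy
      rcases lt_trichotomy (σ x) (σ y) with h | h | h
      · exact (hτ_lt_iff x y h).1 (hsame x hx y hy h)
      · rw [hσ h]
      · exact ((hτ_lt_iff y x h).1 (hsame y hy x hx h)).symm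
    refine (card_le_card_of_injOn (fun x => r x % m) (t := range m) ?_ ?_).trans_eq (card_range m)
    · exact fun x _ => mem_range.2 (Nat.mod_lt _ (Nat.zero_lt_of_lt (hqm x)))
    · intro x hx y hy h
      apply hrinj
      rw [← Nat.div_add_mod (r x) m, ← Nat.div_add_mod (r y) m]
      exact congrArg₂ _ (congrArg (m * ·) (hq_eq x hx y hy)) h
  · refine (card_le_card_of_injOn q (t := range m) (fun x _ => mem_range.2 (hqm x)) ?_).trans_eq
      (card_range m)
    intro x hx y hy h
    by_contra hne
    rcases (hσ.ne hne).lt_or_gt with hxy | hxy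
    · exact (hrev x hx y hy hxy).asymm ((hτ_lt_iff x y hxy).2 h)
    · exact (hrev y hy x hx hxy).asymm ((hτ_lt_iff y x hxy).2 h.symm)

/-- For every integer `k ≥ 2`, the minimum number of vertices in a
`k`-graph with the weak Erdős–Szekeres property equals `(k−1)²+1`, and likewise for the
strong Erdős–Szekeres property: there is a `k`-graph on `(k−1)²+1` vertices with the
strong property, while no `k`-graph on at most `(k−1)²` vertices has even the weak
property. That is, `n_wES(k) = n_sES(k) = (k−1)²+1`. -/
theorem stmt_11 (k : ℕ) (hk : 2 ≤ k) :
    (∃ E : Finset (Finset (Fin ((k - 1) ^ 2 + 1))),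
      (∀ e ∈ E, e.card = k) ∧
      (∀ σ τ : Fin ((k - 1) ^ 2 + 1) → ℕ,
        Function.Injective σ → Function.Injective τ →
          ∃ e ∈ E, (∀ x ∈ e, ∀ y ∈ e, σ x < σ y → τ x < τ y) ∨
                   (∀ x ∈ e, ∀ y ∈ e, σ x < σ y → τ y < τ x))) ∧
    (∀ (V : Type) [Fintype V], Fintype.card V ≤ (k - 1) ^ 2 →
      ∀ E : Finset (Finset V), (∀ e ∈ E, e.card = k) →
        ¬ ∃ σ : V → ℕ, Function.Injective σ ∧
          ∀ τ : V → ℕ, Function.Injective τ →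
            ∃ e ∈ E, (∀ x ∈ e, ∀ y ∈ e, σ x < σ y → τ x < τ y) ∨
                     (∀ x ∈ e, ∀ y ∈ e, σ x < σ y → τ y < τ x)) := by
  refine ⟨⟨powersetCard k univ, fun e => mem_powersetCard_univ.1, fun σ τ _ hτ => ?_⟩, ?_⟩
  · obtain ⟨e, he⟩ := exists_sameOrderOn_or_reverseOrderOn (σ := σ) hτ
      (r := k - 1) (s := k - 1) (by simp [sq])
    have hke : k ≤ #e := by rcases he with ⟨h, -⟩ | ⟨h, -⟩ <;> omega
    obtain ⟨e', he', hcard⟩ := exists_subset_card_eq hke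
    exact ⟨e', mem_powersetCard_univ.2 hcard, he.imp (·.2.mono he') (·.2.mono he')⟩
  · rintro V _ hV E hE ⟨σ, hσ, hES⟩
    obtain ⟨τ, hτ, hsmall⟩ := exists_injective_forall_card_le hσ (m := k - 1) (by rwa [← sq])
    obtain ⟨e, heE, he⟩ := hES τ hτ
    have := hsmall e he
    have := hE e heE
    omega
end

section
/- Let k ≥ 2 and let H be a k-uniform hypergraph on n vertices with m edges (a family of m distinct k-element subsets of the vertex set). If n!·(1 − 1/k!)^m < 1, then the edges of H can be oriented (each k-element edge replaced by an ordered k-tuple of its vertices) so that the resulting oriented k-graph has Property O. -/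
/-!
Orient every edge by an independent uniformly random ordering. A fixed linear order of the
vertices is consistent with exactly one of the `k!` orderings of each edge, so it fails all
`m` edges with probability `(1 - 1/k!)^m`; the union bound over the `n!` linear orders leaves
some orientation consistent with every order. Counted exactly: the orientations missing the
consistent ordering on every edge form a box of size `(k! - 1)^m`.
-/

open Finset Function

lemma exists_equiv_fin_lt_iff {V α : Type*} [Fintype V] [LinearOrder α] {n : ℕ}
    (hV : Fintype.card V = n) {σ : V → α} (hσ : Injective σ) :
    ∃ τ : V ≃ Fin n, ∀ x y, τ x < τ y ↔ σ x < σ y := by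
  let _ : LinearOrder V := LinearOrder.lift' σ hσ
  exact ⟨(Fintype.orderIsoFinOfCardEq V hV).symm.toEquiv, fun x y =>
    (Fintype.orderIsoFinOfCardEq V hV).symm.lt_iff_lt⟩

lemma Finset.exists_equiv_fin_strictMono {V α : Type*} [LinearOrder α] {f : V → α}
    (hf : Injective f) {s : Finset V} {k : ℕ} (hs : s.card = k) :
    ∃ ψ : Fin k ≃ s, StrictMono fun i => f (ψ i) := by
  set φ : Fin k ≃ s := (s.equivFinOfCardEq hs).symm
  have hg : Injective fun i => f (φ i) := hf.comp (Subtype.val_injective.comp φ.injective)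
  exact ⟨(Tuple.sort _).trans φ,
    (Tuple.monotone_sort _).strictMono_of_injective (hg.comp (Tuple.sort _).injective)⟩

lemma exists_pi_forall_exists_eq {ι T : Type*} {β : ι → Type*} [Fintype ι] [DecidableEq ι]
    [Fintype T] [∀ i, Fintype (β i)] [∀ i, DecidableEq (β i)] {b : ℕ}
    (hβ : ∀ i, Fintype.card (β i) = b) (good : T → ∀ i, β i)
    (h : Fintype.card T * (b - 1) ^ Fintype.card ι < b ^ Fintype.card ι) :
    ∃ ω : ∀ i, β i, ∀ t, ∃ i, ω i = good t i := by
  by_contra! hbad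
  set avoid : T → Finset (∀ i, β i) := fun t => Fintype.piFinset fun i => univ.erase (good t i)
  have hcover : (univ : Finset (∀ i, β i)) ⊆ univ.biUnion avoid := fun ω _ => by
    obtain ⟨t, ht⟩ := hbad ω
    exact mem_biUnion.2 ⟨t, mem_univ _, Fintype.mem_piFinset.2 fun i => by simp [ht i]⟩
  have hcard_avoid : ∀ t, (avoid t).card = (b - 1) ^ Fintype.card ι := fun t => by
    simp [avoid, hβ]
  have := calc b ^ Fintype.card ι = (univ : Finset (∀ i, β i)).card := by simp [hβ]
    _ ≤ (univ.biUnion avoid).card := card_le_card hcover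
    _ ≤ ∑ t, (avoid t).card := card_biUnion_le
    _ = Fintype.card T * (b - 1) ^ Fintype.card ι := by simp [hcard_avoid]
  omega

lemma mul_sub_one_pow_lt_pow_of_real {N q m : ℕ} (hq : 0 < q)
    (h : (N : ℝ) * (1 - 1 / (q : ℝ)) ^ m < 1) : N * (q - 1) ^ m < q ^ m := by
  have hqR : (0 : ℝ) < q := by exact_mod_cast hq
  have hfrac : 1 - 1 / (q : ℝ) = ((q - 1 : ℕ) : ℝ) / q := by
    rw [Nat.cast_sub hq, one_sub_div hqR.ne', Nat.cast_one]
  rw [hfrac, div_pow, ← mul_div_assoc, div_lt_one (by positivity)] at h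
  exact_mod_cast h

theorem stmt_13_general (k n m : ℕ) (V : Type*) [Fintype V]
    (hV : Fintype.card V = n)
    (E : Finset (Finset V))
    (hcard : ∀ e ∈ E, e.card = k)
    (hm : E.card = m)
    (h : (Nat.factorial n : ℝ) * (1 - 1 / (Nat.factorial k : ℝ)) ^ m < 1) :
    ∃ o : Finset V → (Fin k → V),
      (∀ e ∈ E, Function.Injective (o e) ∧ Set.range (o e) = (e : Set V)) ∧
      (∀ σ : V → ℕ, Function.Injective σ →
        ∃ e ∈ E, ∀ i j : Fin k, i < j → σ (o e i) < σ (o e j)) := by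
  classical
  have hcount := mul_sub_one_pow_lt_pow_of_real (Nat.factorial_pos k) h
  obtain ⟨e₀, he₀⟩ : E.Nonempty := by
    rw [nonempty_iff_ne_empty]
    rintro rfl
    subst hm
    simp [Nat.factorial_ne_zero] at hcount
  choose good hgood using fun (τ : V ≃ Fin n) (e : E) =>
    Finset.exists_equiv_fin_strictMono τ.injective (hcard e e.2)
  obtain ⟨ω, hω⟩ := exists_pi_forall_exists_eq (b := k.factorial)
    (fun e => by rw [Fintype.card_equiv (e.1.equivFinOfCardEq (hcard e e.2)).symm,
      Fintype.card_fin]) good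
    (by rwa [Fintype.card_equiv (Fintype.equivFinOfCardEq hV), hV, Fintype.card_coe, hm])
  refine ⟨fun s => if hs : s ∈ E then fun i => ω ⟨s, hs⟩ i else fun i => ω ⟨e₀, he₀⟩ i,
    fun e he => ?_, fun σ hσ => ?_⟩
  · simp only [dif_pos he]
    refine ⟨Subtype.val_injective.comp (ω _).injective, ?_⟩
    ext x
    refine ⟨?_, fun hx => ⟨(ω ⟨e, he⟩).symm ⟨x, hx⟩, by simp⟩⟩
    rintro ⟨i, rfl⟩
    exact (ω ⟨e, he⟩ i).2
  · obtain ⟨τ, hτ⟩ := exists_equiv_fin_lt_iff hV hσ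
    obtain ⟨e, he⟩ := hω τ
    refine ⟨e, e.2, fun i j hij => ?_⟩
    simpa only [dif_pos e.2, he, hτ] using hgood τ e hij

/-- Let `k ≥ 2` and let `H` be a `k`-uniform hypergraph on `n`
vertices with `m` edges. If `n!·(1 − 1/k!)^m < 1`, then the edges of `H` can be
oriented (each `k`-element edge replaced by an ordered `k`-tuple of its vertices)
so that the resulting oriented `k`-graph has Property O. -/
theorem stmt_13 (k n m : ℕ) (hk : 2 ≤ k) (V : Type*) [Fintype V]
    (hV : Fintype.card V = n)
    (E : Finset (Finset V))
    (hcard : ∀ e ∈ E, e.card = k)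
    (hm : E.card = m)
    (h : (Nat.factorial n : ℝ) * (1 - 1 / (Nat.factorial k : ℝ)) ^ m < 1) :
    ∃ o : Finset V → (Fin k → V),
      (∀ e ∈ E, Function.Injective (o e) ∧ Set.range (o e) = (e : Set V)) ∧
      (∀ σ : V → ℕ, Function.Injective σ →
        ∃ e ∈ E, ∀ i j : Fin k, i < j → σ (o e i) < σ (o e j)) :=
  stmt_13_general k n m V hV E hcard hm h
end

section
/- Let k ≥ 3 and n = (k−1)² + 1, and let a₁, a₂, …, a_n be a sequence of distinct real numbers. Then there exist indices i₁ < i₂ < ⋯ < i_k such that the subsequence a_{i₁}, a_{i₂}, …, a_{i_k} is strictly monotone (increasing or decreasing) and moreover either i_k ≤ n−1, or (i_{k−1}, i_k) = (n−1, n). -/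
/-!
Label each of the first `(k-1)²` terms by the lengths of the longest increasing and the longest
decreasing subsequence ending there. Distinct terms get distinct labels, so unless some label
exceeds `k-1` (which gives a monotone subsequence of length `k` avoiding the last position), the
labels fill `[1, k-1]²`. The term labelled `(k-1, k-1)` is then the `(n-1)`-st one, since any later
term would raise a coordinate, and the last term extends the increasing or the decreasing
subsequence of length `k-1` ending at it.
-/

open Finset Function OrderDual

theorem StrictMonoOn.le_of_max_eq {ι α : Type*} [LinearOrder ι] [Preorder α] {f : ι → α}
    {t : Finset ι} {i x : ι} (hf : StrictMonoOn f t) (hmax : t.max = i) (hx : x ∈ t) :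
    f x ≤ f i :=
  hf.monotoneOn hx (mem_of_max hmax) (le_max_of_eq hx hmax)

theorem Fin.strictMono_snoc {β : Type*} [Preorder β] {n : ℕ} {v : Fin n → β} {x : β}
    (hv : StrictMono v) (hx : ∀ i, v i < x) : StrictMono (Fin.snoc v x : Fin (n + 1) → β) := by
  intro p q hpq
  induction q using Fin.lastCases with
  | last =>
    induction p using Fin.lastCases with
    | last => exact absurd hpq (lt_irrefl _)
    | cast p => simpa using hx p
  | cast q =>
    induction p using Fin.lastCases with
    | last => exact absurd hpq (not_lt.2 (Fin.le_last _))
    | cast p => simpa using hv (Fin.castSucc_lt_castSucc_iff.1 hpq)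

namespace ErdosSzekeres

variable {ι α : Type*} [LinearOrder ι] [LinearOrder α]

section Labels

variable [Fintype ι] (f : ι → α)

def incChainsEndingAt (i : ι) : Finset (Finset ι) :=
  {t | t.max = i ∧ StrictMonoOn f t}

def lisEndingAt (i : ι) : ℕ :=
  (incChainsEndingAt f i).sup card

variable {f}

theorem card_le_lisEndingAt {i : ι} {t : Finset ι} (hmax : t.max = i)
    (hf : StrictMonoOn f t) : #t ≤ lisEndingAt f i :=
  le_sup (f := card) (by simp [incChainsEndingAt, hmax, hf])

theorem exists_card_eq_lisEndingAt (i : ι) :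
    ∃ t : Finset ι, t.max = i ∧ StrictMonoOn f t ∧ #t = lisEndingAt f i := by
  obtain ⟨t, ht, hcard⟩ := exists_mem_eq_sup (incChainsEndingAt f i)
    ⟨{i}, by simp [incChainsEndingAt]⟩ card
  simp only [incChainsEndingAt, mem_filter, mem_univ, true_and] at ht
  exact ⟨t, ht.1, ht.2, hcard.symm⟩

theorem one_le_lisEndingAt (i : ι) : 1 ≤ lisEndingAt f i :=
  card_le_lisEndingAt (t := {i}) max_singleton (by simp)

theorem lisEndingAt_lt_of_lt {i j : ι} (hij : i < j) (hf : f i < f j) :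
    lisEndingAt f i < lisEndingAt f j := by
  obtain ⟨t, hmax, hmono, hcard⟩ := exists_card_eq_lisEndingAt (f := f) i
  have hlt : ∀ x ∈ t, x < j := fun x hx => (le_max_of_eq hx hmax).trans_lt hij
  have hmax' : (insert j t).max = j := by
    rw [max_insert, hmax, max_eq_left (WithBot.coe_le_coe.2 hij.le)]
  have hmono' : StrictMonoOn f ↑(insert j t) := by
    rw [coe_insert, strictMonoOn_insert_iff_of_forall_le fun x hx => (hlt x hx).le]
    exact ⟨fun x hx _ => (hmono.le_of_max_eq hmax hx).trans_lt hf, hmono⟩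
  have := card_le_lisEndingAt hmax' hmono'
  rw [card_insert_of_notMem fun hj => (hlt j hj).false] at this
  omega

theorem lisEndingAt_lt_or_lt (hf : Injective f) {i j : ι} (hij : i < j) :
    lisEndingAt f i < lisEndingAt f j ∨
      lisEndingAt (toDual ∘ f) i < lisEndingAt (toDual ∘ f) j := by
  rcases (hf.ne hij.ne).lt_or_gt with h | h
  · exact .inl (lisEndingAt_lt_of_lt hij h)
  · exact .inr (lisEndingAt_lt_of_lt hij (toDual_lt_toDual.2 h))

theorem exists_lisEndingAt_eq_of_card_eq_sq (hf : Injective f) {K : ℕ}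
    (hcard : Fintype.card ι = K ^ 2) (hK : 1 ≤ K)
    (hle : ∀ i, lisEndingAt f i ≤ K ∧ lisEndingAt (toDual ∘ f) i ≤ K) :
    ∃ i, lisEndingAt f i = K ∧ lisEndingAt (toDual ∘ f) i = K := by
  let label i := (lisEndingAt f i, lisEndingAt (toDual ∘ f) i)
  have hinj : Injective label := .of_lt_imp_ne fun i j hij heq => by
    have := lisEndingAt_lt_or_lt hf hij
    simp only [label, Prod.ext_iff] at heq
    omega
  have hsub : univ.image label ⊆ Icc 1 K ×ˢ Icc 1 K := by
    simp only [subset_iff, mem_image, mem_univ, true_and, mem_product, mem_Icc]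
    rintro _ ⟨i, rfl⟩
    exact ⟨⟨one_le_lisEndingAt i, (hle i).1⟩, ⟨one_le_lisEndingAt i, (hle i).2⟩⟩
  have hfill : univ.image label = Icc 1 K ×ˢ Icc 1 K := by
    refine eq_of_subset_of_card_le hsub ?_
    rw [card_image_of_injective _ hinj, card_univ, hcard, card_product, Nat.card_Icc,
      Nat.add_sub_cancel, sq]
  have hKK : (K, K) ∈ univ.image label := by
    rw [hfill]
    simp [hK]
  simpa [label] using hKK

theorem le_of_lisEndingAt_eq (hf : Injective f) {K : ℕ}
    (hle : ∀ i, lisEndingAt f i ≤ K ∧ lisEndingAt (toDual ∘ f) i ≤ K) {i : ι}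
    (hi : lisEndingAt f i = K ∧ lisEndingAt (toDual ∘ f) i = K) (j : ι) : j ≤ i := by
  by_contra! hij
  have := lisEndingAt_lt_or_lt hf hij
  have := hle j
  omega

end Labels

theorem exists_strictMono_castSucc_of_le_lisEndingAt {M L : ℕ} {a : Fin (M + 1) → α}
    {i : Fin M} (hlen : L ≤ lisEndingAt (a ∘ Fin.castSucc) i) :
    ∃ s : Fin L → Fin (M + 1), StrictMono s ∧ StrictMono (a ∘ s) ∧
      ∀ j, (s j : ℕ) < M := by
  obtain ⟨t, -, hmono, hcard⟩ := exists_card_eq_lisEndingAt (f := a ∘ Fin.castSucc) i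
  obtain ⟨t', ht't, hcard'⟩ := exists_subset_card_eq (hlen.trans hcard.ge)
  let u := t'.orderEmbOfFin hcard'
  have hu : ∀ j, u j ∈ t := fun j => ht't (orderEmbOfFin_mem t' hcard' j)
  exact ⟨Fin.castSucc ∘ u, Fin.strictMono_castSucc.comp u.strictMono,
    fun p q h => hmono (hu p) (hu q) (u.strictMono h), fun j => (u j).2⟩

theorem exists_strictMono_snoc_of_lisEndingAt_eq {M L : ℕ} {a : Fin (M + 1) → α} {i : Fin M}
    (hlen : lisEndingAt (a ∘ Fin.castSucc) i = L + 1) (hlast : a i.castSucc < a (Fin.last M)) :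
    ∃ s : Fin (L + 2) → Fin (M + 1), StrictMono s ∧ StrictMono (a ∘ s) ∧
      s (Fin.last L).castSucc = i.castSucc ∧ s (Fin.last (L + 1)) = Fin.last M := by
  obtain ⟨t, hmax, hmono, hcard⟩ := exists_card_eq_lisEndingAt (f := a ∘ Fin.castSucc) i
  let u := t.orderEmbOfFin (hcard.trans hlen)
  have hu : ∀ j, u j ∈ t := orderEmbOfFin_mem t _
  have hu_last : u (Fin.last L) = i :=
    (orderEmbOfFin_last _ L.succ_pos).trans (WithBot.coe_injective ((coe_max' _).trans hmax))
  refine ⟨Fin.snoc (Fin.castSucc ∘ u) (Fin.last M),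
    Fin.strictMono_snoc (Fin.strictMono_castSucc.comp u.strictMono)
      fun j => Fin.castSucc_lt_last _, ?_, by simp [hu_last], by simp⟩
  rw [Fin.comp_snoc]
  exact Fin.strictMono_snoc (fun p q h => hmono (hu p) (hu q) (u.strictMono h))
    fun j => (hmono.le_of_max_eq hmax (hu j)).trans_lt hlast

theorem exists_monotone_avoiding_last_or_ending_last {L M : ℕ} (hM : M = (L + 1) ^ 2)
    {a : Fin (M + 1) → α} (ha : Injective a) :
    ∃ s : Fin (L + 2) → Fin (M + 1), StrictMono s ∧
      (StrictMono (a ∘ s) ∨ StrictAnti (a ∘ s)) ∧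
      ((s (Fin.last (L + 1)) : ℕ) < M ∨
        ((s (Fin.last L).castSucc : ℕ) = M - 1 ∧ (s (Fin.last (L + 1)) : ℕ) = M)) := by
  set b := a ∘ Fin.castSucc
  have hb : Injective b := ha.comp (Fin.castSucc_injective M)
  by_cases hlong : ∃ i, L + 1 < lisEndingAt b i ∨ L + 1 < lisEndingAt (toDual ∘ b) i
  · obtain ⟨i, hi | hi⟩ := hlong
    · obtain ⟨s, hs, has, hlt⟩ := exists_strictMono_castSucc_of_le_lisEndingAt hi
      exact ⟨s, hs, .inl has, .inl (hlt _)⟩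
    · obtain ⟨s, hs, has, hlt⟩ :=
        exists_strictMono_castSucc_of_le_lisEndingAt (a := toDual ∘ a) hi
      exact ⟨s, hs, .inr (strictMono_toDual_comp_iff.1 has), .inl (hlt _)⟩
  push Not at hlong
  obtain ⟨i, hi⟩ := exists_lisEndingAt_eq_of_card_eq_sq hb (by simp [hM]) L.succ_pos hlong
  have hi_top : (i : ℕ) = M - 1 := by
    have hM1 : 0 < M := hM ▸ by positivity
    have : M - 1 ≤ i := le_of_lisEndingAt_eq hb hlong hi ⟨M - 1, by omega⟩
    omega
  rcases (ha.ne (Fin.castSucc_lt_last i).ne).lt_or_gt with hinc | hdec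
  · obtain ⟨s, hs, has, hpen, hend⟩ := exists_strictMono_snoc_of_lisEndingAt_eq hi.1 hinc
    exact ⟨s, hs, .inl has, .inr ⟨by simp [hpen, hi_top], by simp [hend]⟩⟩
  · obtain ⟨s, hs, has, hpen, hend⟩ :=
      exists_strictMono_snoc_of_lisEndingAt_eq (a := toDual ∘ a) hi.2 (toDual_lt_toDual.2 hdec)
    exact ⟨s, hs, .inr (strictMono_toDual_comp_iff.1 has),
      .inr ⟨by simp [hpen, hi_top], by simp [hend]⟩⟩

end ErdosSzekeres

/-- Let `k ≥ 3` and `n = (k−1)² + 1`, and let `a₁, …, a_n` be a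
sequence of distinct real numbers. Then there exist indices `i₁ < i₂ < ⋯ < i_k`
(here encoded via a strictly monotone `s : Fin k → Fin n`, zero-based) such that the
subsequence `a_{i₁}, …, a_{i_k}` is strictly monotone (increasing or decreasing) and
moreover either `i_k ≤ n−1` (zero-based: the last index is `< n−1`), or
`(i_{k−1}, i_k) = (n−1, n)` (zero-based: the last two indices are `n−2` and `n−1`). -/
theorem stmt_14 (k n : ℕ) (hk : 3 ≤ k) (hn : n = (k - 1) ^ 2 + 1)
    (a : Fin n → ℝ) (ha : Function.Injective a) :
    ∃ s : Fin k → Fin n, StrictMono s ∧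
      (StrictMono (a ∘ s) ∨ StrictAnti (a ∘ s)) ∧
      (((s ⟨k - 1, by omega⟩ : ℕ) < n - 1) ∨
        ((s ⟨k - 2, by omega⟩ : ℕ) = n - 2 ∧ (s ⟨k - 1, by omega⟩ : ℕ) = n - 1)) := by
  obtain ⟨L, rfl⟩ : ∃ L, k = L + 2 := ⟨k - 2, by omega⟩
  subst hn
  exact ErdosSzekeres.exists_monotone_avoiding_last_or_ending_last rfl ha
end

section
/- For every integer k ≥ 3, there exists an oriented k-graph with Property O having exactly (⌊k/2⌋ + 1)·k! − ⌊k/2⌋·(k−1)! edges; that is, f(k) ≤ (⌊k/2⌋ + 1)·k! − ⌊k/2⌋·(k−1)!. -/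
/-!
Write `k = c + 1`. The vertices are `x i` for `i < c` and, for every permutation `ρ` of the `x`'s,
a vertex `u ρ` and vertices `v ρ r` for `r < c`. Reading the `x`'s in the order `ρ`, the edges
attached to `ρ` are: `A`, all the `x`'s followed by `u ρ`; `M r`, with `v ρ r` inserted before the
`r`-th `x`; and `D r m` (`m < r`, `m` even) and `U r m` (`r ≤ m`, `m ≡ c - 1 mod 2`), where the
`m`-th `x` is replaced by `v ρ r` and `u ρ` is inserted before the `r`-th `x`.

Given a linear order, let `ρ` list the `x`'s increasingly and let `r` be the number of them
below `u ρ`. If `r = c` the edge `A` is consistent. Otherwise let `g` be the number of `x`'s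
below `v ρ r`; then `g ≤ r` if `v ρ r < u ρ` and `r ≤ g` if `u ρ < v ρ r`. The edge `M r` is
consistent when `g = r`, and otherwise dropping the `m`-th `x` for the `m ∈ {g - 1, g}` of the
allowed parity makes `D r m` or `U r m` consistent; the parities are chosen so that `m` always
exists, and then exactly `⌊(c + 3) / 2⌋` edges are attached to each pair `(ρ, r)`.
-/

open Finset Function Equiv
open scoped Nat

theorem List.Pairwise.append_cons {α : Type*} {R : α → α → Prop} [IsTrans α R]
    {l₁ l₂ : List α} {a : α} (h₁ : l₁.Pairwise R) (h₂ : l₂.Pairwise R)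
    (ha₁ : ∀ b ∈ l₁, R b a) (ha₂ : ∀ b ∈ l₂, R a b) : (l₁ ++ a :: l₂).Pairwise R := by
  refine List.pairwise_append.mpr ⟨h₁, List.pairwise_cons.mpr ⟨ha₂, h₂⟩, fun b hb d hd => ?_⟩
  rcases List.mem_cons.mp hd with rfl | hd
  · exact ha₁ b hb
  · exact _root_.trans (ha₁ b hb) (ha₂ d hd)

theorem Fin.exists_cut_of_monotone {c : ℕ} {α : Type*} [LinearOrder α] {F : Fin c → α}
    (hF : Monotone F) {t : α} (ht : ∀ i, F i ≠ t) :
    ∃ p ≤ c, (∀ i : Fin c, (i : ℕ) < p → F i < t) ∧ ∀ i : Fin c, p ≤ i → t < F i := by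
  classical
  have lt_card_iff (i : Fin c) : (i : ℕ) < #{j | F j < t} ↔ F i < t := by
    constructor
    · intro hi
      by_contra! h
      have : #{j | F j < t} ≤ #(Iio i) := card_le_card fun j hj => by
        simp only [mem_filter, mem_univ, true_and, mem_Iio] at hj ⊢
        by_contra! hij
        exact absurd hj (not_lt.mpr (h.trans (hF hij)))
      rw [Fin.card_Iio] at this
      omega
    · intro h
      have : #(Iic i) ≤ #{j | F j < t} := card_le_card fun j hj => by
        simp only [mem_filter, mem_univ, true_and, mem_Iic] at hj ⊢
        exact (hF hj).trans_lt h
      rw [Fin.card_Iic] at this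
      omega
  refine ⟨#{j | F j < t}, card_le_univ _ |>.trans_eq (Fintype.card_fin c),
    fun i => (lt_card_iff i).mp, fun i hi => ?_⟩
  exact (not_lt.mp ((lt_card_iff i).not.mp (by omega))).lt_of_ne' (ht i)

theorem Nat.card_filter_Ico_mod_two (a b q : ℕ) :
    #{m ∈ Ico a b | m % 2 = q % 2} = (b + 1 - q % 2) / 2 - (a + 1 - q % 2) / 2 := by
  induction b with
  | zero => rw [Ico_eq_empty_of_le a.zero_le, filter_empty, card_empty]; omega
  | succ b ih =>
    by_cases hab : a ≤ b
    · rw [Nat.Ico_succ_right_eq_insert_Ico hab, filter_insert]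
      split_ifs with hb
      · rw [card_insert_of_notMem (by simp), ih]; omega
      · rw [ih]; omega
    · rw [Ico_eq_empty (by omega), filter_empty, card_empty]; omega

namespace PropertyO

theorem exists_oriented_of_lists {V ι : Type*} [Fintype V] (k : ℕ) (I : Finset ι)
    (l : ι → List V) (length_l : ∀ i, (l i).length = k) (nodup_l : ∀ i, (l i).Nodup)
    (eq_of_mem_iff : ∀ i j, (∀ w, w ∈ l i ↔ w ∈ l j) → i = j)
    (exists_pairwise : ∀ τ : V → ℕ, Injective τ → ∃ i ∈ I, (l i).Pairwise (τ · < τ ·)) :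
    ∃ (n : ℕ) (E : Finset (Fin k → Fin n)),
      (∀ e ∈ E, Injective e) ∧
      (∀ e ∈ E, ∀ f ∈ E, Set.range e = Set.range f → e = f) ∧
      (∀ σ : Fin n → ℕ, Injective σ → ∃ e ∈ E, ∀ i j : Fin k, i < j → σ (e i) < σ (e j)) ∧
      E.card = I.card := by
  classical
  let idx := Fintype.equivFin V
  let tuple (i : ι) : Fin k → Fin (Fintype.card V) :=
    fun j => idx ((l i).get (j.cast (length_l i).symm))
  have eq_of_range_eq {i j : ι} (h : Set.range (tuple i) = Set.range (tuple j)) : i = j := by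
    have range_tuple (i : ι) : Set.range (tuple i) = idx '' {w | w ∈ l i} := by
      rw [← Set.range_list_get, ← Set.range_comp,
        ← (finCongr (length_l i).symm).surjective.range_comp]
      rfl
    rw [range_tuple, range_tuple, (Set.image_injective.mpr idx.injective).eq_iff] at h
    exact eq_of_mem_iff i j fun w => Set.ext_iff.mp h w
  refine ⟨_, I.image tuple, ?_, ?_, ?_,
    card_image_of_injective _ fun i j h => eq_of_range_eq (congrArg Set.range h)⟩
  · simp only [mem_image]
    rintro _ ⟨i, -, rfl⟩
    exact idx.injective.comp ((nodup_l i).injective_get.comp (Fin.cast_injective _))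
  · simp only [mem_image]
    rintro _ ⟨i, -, rfl⟩ _ ⟨j, -, rfl⟩ h
    rw [eq_of_range_eq h]
  · intro σ hσ
    obtain ⟨i, hi, hl⟩ := exists_pairwise (σ ∘ idx) (hσ.comp idx.injective)
    exact ⟨tuple i, mem_image_of_mem _ hi, fun a b hab => List.pairwise_iff_get.mp hl _ _ hab⟩

variable {c : ℕ}

abbrev Vertex (c : ℕ) := Fin c ⊕ (Perm (Fin c) ⊕ Perm (Fin c) × Fin c)

abbrev x (i : Fin c) : Vertex c := .inl i
abbrev u (ρ : Perm (Fin c)) : Vertex c := .inr (.inl ρ)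
abbrev v (ρ : Perm (Fin c)) (r : Fin c) : Vertex c := .inr (.inr (ρ, r))

def seg (ρ : Perm (Fin c)) (a b : ℕ) : List (Vertex c) :=
  (((List.finRange c).map fun i => x (ρ i)).drop a).take (b - a)

section Seg

variable {ρ : Perm (Fin c)} {a b : ℕ}

theorem length_seg : (seg ρ a b).length = min (b - a) (c - a) := by
  simp [seg]

theorem mem_seg {w : Vertex c} :
    w ∈ seg ρ a b ↔ ∃ i : Fin c, a ≤ i ∧ i < b ∧ x (ρ i) = w := by
  simp only [seg, List.mem_take_iff_getElem, List.getElem_drop, List.getElem_map,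
    List.getElem_finRange, List.length_drop, List.length_map, List.length_finRange]
  constructor
  · rintro ⟨n, hn, rfl⟩
    exact ⟨_, by simp, by simp only [Fin.cast_mk]; omega, rfl⟩
  · rintro ⟨i, hai, hib, rfl⟩
    refine ⟨i - a, by omega, congrArg (fun j => x (ρ j)) (Fin.ext ?_)⟩
    simp only [Fin.cast_mk]
    omega

@[simp] theorem x_mem_seg {i : Fin c} : x (ρ i) ∈ seg ρ a b ↔ a ≤ i ∧ i < b := by
  simp [mem_seg]

@[simp] theorem u_notMem_seg {σ : Perm (Fin c)} : u σ ∉ seg ρ a b := by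
  simp [mem_seg]

@[simp] theorem v_notMem_seg {σ : Perm (Fin c)} {s : Fin c} : v σ s ∉ seg ρ a b := by
  simp [mem_seg]

theorem forall_mem_seg {P : Vertex c → Prop} :
    (∀ w ∈ seg ρ a b, P w) ↔ ∀ i : Fin c, a ≤ i → i < b → P (x (ρ i)) :=
  ⟨fun h i hai hib => h _ (mem_seg.mpr ⟨i, hai, hib, rfl⟩),
    fun h _ hw => by obtain ⟨i, hai, hib, rfl⟩ := mem_seg.mp hw; exact h i hai hib⟩

theorem pairwise_seg {τ : Vertex c → ℕ} (hρ : StrictMono fun i => τ (x (ρ i))) :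
    (seg ρ a b).Pairwise (τ · < τ ·) := by
  have : ((List.finRange c).map fun i => x (ρ i)).Pairwise (τ · < τ ·) :=
    List.pairwise_map.mpr ((List.pairwise_lt_finRange c).imp (hρ ·))
  exact (this.sublist (List.drop_sublist _ _)).sublist (List.take_sublist _ _)

end Seg

/-- `none` is the edge `A`, `some (r, none)` is `M r`, and `some (r, some m)` is `D r m` or
`U r m` according as `m < r` or `r ≤ m`. -/
abbrev Index (c : ℕ) := Option (Fin c × Option (Fin c))

def edge (ρ : Perm (Fin c)) : Index c → List (Vertex c)
  | none => seg ρ 0 c ++ [u ρ]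
  | some (r, none) => seg ρ 0 r ++ v ρ r :: seg ρ r c
  | some (r, some m) =>
    if m < r then seg ρ 0 m ++ v ρ r :: (seg ρ (m + 1) r ++ u ρ :: seg ρ r c)
    else seg ρ 0 r ++ u ρ :: (seg ρ r m ++ v ρ r :: seg ρ (m + 1) c)

section Pairwise

variable (τ : Vertex c → ℕ) {ρ : Perm (Fin c)}

theorem pairwise_edge_none (hρ : StrictMono fun i => τ (x (ρ i)))
    (hu : ∀ i, τ (x (ρ i)) < τ (u ρ)) : (edge ρ none).Pairwise (τ · < τ ·) :=
  (pairwise_seg hρ).append_cons List.Pairwise.nil (forall_mem_seg.mpr fun i _ _ => hu i)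
    (by simp)

theorem pairwise_edge_mid (hρ : StrictMono fun i => τ (x (ρ i))) {r : Fin c}
    (hv₁ : ∀ i, i < r → τ (x (ρ i)) < τ (v ρ r)) (hv₂ : ∀ i, r ≤ i → τ (v ρ r) < τ (x (ρ i))) :
    (edge ρ (some (r, none))).Pairwise (τ · < τ ·) :=
  (pairwise_seg hρ).append_cons (pairwise_seg hρ) (forall_mem_seg.mpr fun i _ hi => hv₁ i hi)
    (forall_mem_seg.mpr fun i hi _ => hv₂ i hi)

theorem pairwise_edge_of_lt (hρ : StrictMono fun i => τ (x (ρ i))) {r m : Fin c} (hmr : m < r)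
    (hu₁ : ∀ i, i < r → τ (x (ρ i)) < τ (u ρ)) (hu₂ : ∀ i, r ≤ i → τ (u ρ) < τ (x (ρ i)))
    (hv₁ : ∀ i, i < m → τ (x (ρ i)) < τ (v ρ r)) (hv₂ : ∀ i, m < i → τ (v ρ r) < τ (x (ρ i)))
    (hvu : τ (v ρ r) < τ (u ρ)) : (edge ρ (some (r, some m))).Pairwise (τ · < τ ·) := by
  rw [edge, if_pos hmr]
  refine (pairwise_seg hρ).append_cons
    ((pairwise_seg hρ).append_cons (pairwise_seg hρ) ?_ ?_) ?_ ?_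
  all_goals
    simp only [forall_mem_seg, List.mem_append, List.mem_cons, or_imp, forall_and, forall_eq]
  · exact fun i _ hi => hu₁ i hi
  · exact fun i hi _ => hu₂ i hi
  · exact fun i _ hi => hv₁ i hi
  · exact ⟨fun i hi _ => hv₂ i hi, hvu, fun i hi _ => hv₂ i (hmr.trans_le hi)⟩

theorem pairwise_edge_of_le (hρ : StrictMono fun i => τ (x (ρ i))) {r m : Fin c} (hrm : r ≤ m)
    (hu₁ : ∀ i, i < r → τ (x (ρ i)) < τ (u ρ)) (hu₂ : ∀ i, r ≤ i → τ (u ρ) < τ (x (ρ i)))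
    (hv₁ : ∀ i, i < m → τ (x (ρ i)) < τ (v ρ r)) (hv₂ : ∀ i, m < i → τ (v ρ r) < τ (x (ρ i)))
    (huv : τ (u ρ) < τ (v ρ r)) : (edge ρ (some (r, some m))).Pairwise (τ · < τ ·) := by
  rw [edge, if_neg hrm.not_gt]
  refine (pairwise_seg hρ).append_cons
    ((pairwise_seg hρ).append_cons (pairwise_seg hρ) ?_ ?_) ?_ ?_
  all_goals
    simp only [forall_mem_seg, List.mem_append, List.mem_cons, or_imp, forall_and, forall_eq]
  · exact fun i _ hi => hv₁ i hi
  · exact fun i hi _ => hv₂ i hi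
  · exact fun i _ hi => hu₁ i hi
  · exact ⟨fun i hi _ => hu₂ i hi, huv, fun i hi _ => hu₂ i (hrm.trans (Nat.le_of_succ_le hi))⟩

end Pairwise

/-- `edge ρ κ` increases along `key ρ κ`: the `x`'s get even keys, `u ρ` (and `v ρ r` in `M r`)
sits just before `x (ρ r)`, and in `D r m`, `U r m` the vertex `v ρ r` takes the key of the
omitted `x (ρ m)`. -/
def key (ρ : Perm (Fin c)) : Index c → Vertex c → ℕ
  | _, .inl i => 2 * ρ.symm i + 2
  | none, .inr _ => 2 * c + 1
  | some (r, _), .inr (.inl _) => 2 * r + 1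
  | some (r, none), .inr (.inr _) => 2 * r + 1
  | some (_, some m), .inr (.inr _) => 2 * m + 2

theorem nodup_edge (ρ : Perm (Fin c)) (κ : Index c) : (edge ρ κ).Nodup := by
  have hρ : StrictMono fun i => key ρ κ (x (ρ i)) := fun i j h => by
    simp only [key, symm_apply_apply]
    omega
  suffices (edge ρ κ).Pairwise (key ρ κ · < key ρ κ ·) from
    this.imp fun h e => h.ne (congrArg _ e)
  rcases κ with _ | ⟨r, _ | m⟩
  · exact pairwise_edge_none _ hρ fun i => by simp only [key, symm_apply_apply]; omega
  · refine pairwise_edge_mid _ hρ ?_ ?_ <;> intros <;> simp only [key, symm_apply_apply] <;> omega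
  · obtain hmr | hrm := lt_or_ge m r
    · refine pairwise_edge_of_lt _ hρ hmr ?_ ?_ ?_ ?_ ?_ <;> intros <;>
        simp only [key, symm_apply_apply] <;> omega
    · refine pairwise_edge_of_le _ hρ hrm ?_ ?_ ?_ ?_ ?_ <;> intros <;>
        simp only [key, symm_apply_apply] <;> omega

theorem length_edge (ρ : Perm (Fin c)) (κ : Index c) : (edge ρ κ).length = c + 1 := by
  rcases κ with _ | ⟨r, _ | m⟩
  · simp only [edge, List.length_append, List.length_singleton, length_seg]; omega
  · simp only [edge, List.length_append, List.length_cons, length_seg]; omega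
  · simp only [edge]
    split_ifs <;> simp only [List.length_append, List.length_cons, length_seg] <;> omega

section Mem

variable {ρ : Perm (Fin c)} {κ : Index c}

theorem x_mem_edge {i : Fin c} : x (ρ i) ∈ edge ρ κ ↔ ∀ r, κ ≠ some (r, some i) := by
  rcases κ with _ | ⟨r, _ | m⟩
  · simp [edge]
  all_goals
    simp only [edge]
    try split_ifs
  all_goals
    simp only [List.mem_append, List.mem_cons, x_mem_seg, reduceCtorEq, false_or, ne_eq,
      Option.some.injEq, Prod.mk.injEq, not_and, forall_eq', and_false, not_false_eq_true,
      implies_true, iff_true]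
    omega

theorem u_mem_edge {σ : Perm (Fin c)} : u σ ∈ edge ρ κ ↔ σ = ρ ∧ ∀ r, κ ≠ some (r, none) := by
  rcases κ with _ | ⟨r, _ | m⟩
  · simp [edge]
  · simp [edge]
  · simp only [edge]; split_ifs <;> simp

theorem v_mem_edge {σ : Perm (Fin c)} {s : Fin c} :
    v σ s ∈ edge ρ κ ↔ σ = ρ ∧ ∃ o, κ = some (s, o) := by
  rcases κ with _ | ⟨r, _ | m⟩
  · simp [edge]
  · simp [edge, eq_comm]
  · simp only [edge]; split_ifs <;> simp [eq_comm]

end Mem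

theorem eq_of_mem_edge_iff {ρ ρ' : Perm (Fin c)} {κ κ' : Index c}
    (h : ∀ w, w ∈ edge ρ κ ↔ w ∈ edge ρ' κ') : ρ = ρ' ∧ κ = κ' := by
  obtain rfl : ρ = ρ' := by
    by_cases hκ : ∃ r, κ = some (r, none)
    · obtain ⟨r, rfl⟩ := hκ
      exact (v_mem_edge.mp ((h _).mp (v_mem_edge.mpr ⟨rfl, none, rfl⟩))).1
    · push Not at hκ
      exact (u_mem_edge.mp ((h _).mp (u_mem_edge.mpr ⟨rfl, hκ⟩))).1
  refine ⟨rfl, ?_⟩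
  -- the `v`'s determine `r`, `u ρ` tells `M r` apart, and the missing `x` determines `m`
  have hx := fun i => h (x (ρ i))
  have hu := h (u ρ)
  have hv := fun s => h (v ρ s)
  simp only [x_mem_edge, u_mem_edge, v_mem_edge, true_and] at hx hu hv
  clear h
  rcases κ with _ | ⟨r, _ | m⟩ <;> rcases κ' with _ | ⟨r', _ | m'⟩ <;> simp_all
  simpa [eq_comm] using hx m

def IsValid : Index c → Prop
  | none => True
  | some (r, none) => (r : ℕ) % 2 = 0 ∨ (c - r) % 2 = 0
  | some (r, some m) => m < r ∧ (m : ℕ) % 2 = 0 ∨ r ≤ m ∧ (m : ℕ) % 2 = (c - 1) % 2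

instance : DecidablePred (IsValid (c := c))
  | none => inferInstanceAs (Decidable True)
  | some (_, none) => inferInstanceAs (Decidable (_ ∨ _))
  | some (_, some _) => inferInstanceAs (Decidable (_ ∨ _))

theorem sum_isValid_row (r : Fin c) :
    ((if IsValid (some (r, none)) then 1 else 0) +
      ∑ m, if IsValid (some (r, some m)) then 1 else 0) = (c + 3) / 2 := by
  have hsum : (∑ m : Fin c, if IsValid (some (r, some m)) then 1 else 0) =
      #{n ∈ Ico 0 (r : ℕ) | n % 2 = 0 % 2} + #{n ∈ Ico (r : ℕ) c | n % 2 = (c - 1) % 2} := by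
    simp only [IsValid, Fin.lt_def, Fin.le_def]
    rw [Fin.sum_univ_eq_sum_range
        (fun n => if n < r ∧ n % 2 = 0 ∨ r ≤ n ∧ n % 2 = (c - 1) % 2 then 1 else 0),
      ← sum_range_add_sum_Ico _ r.isLt.le, card_filter, card_filter, range_eq_Ico]
    congr 1 <;> refine sum_congr rfl fun n hn => ?_ <;> simp only [mem_Ico] at hn <;>
      split_ifs <;> omega
  rw [hsum, Nat.card_filter_Ico_mod_two, Nat.card_filter_Ico_mod_two]
  split_ifs with h <;> simp only [IsValid] at h <;> omega

theorem card_isValid : #{κ : Index c | IsValid κ} = 1 + c * ((c + 3) / 2) := by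
  simp only [card_filter, Fintype.sum_option, Fintype.sum_prod_type, sum_isValid_row]
  simp [IsValid]

theorem exists_isValid_pairwise_edge (τ : Vertex c → ℕ) (hτ : Injective τ) :
    ∃ ρ : Perm (Fin c), ∃ κ : Index c, IsValid κ ∧ (edge ρ κ).Pairwise (τ · < τ ·) := by
  let ρ := Tuple.sort fun i => τ (x i)
  have hρ : StrictMono fun i => τ (x (ρ i)) :=
    (Tuple.monotone_sort fun i => τ (x i)).strictMono_of_injective
      (hτ.comp (Sum.inl_injective.comp ρ.injective))
  obtain ⟨p, hpc, hu₁, hu₂⟩ :=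
    Fin.exists_cut_of_monotone hρ.monotone (t := τ (u ρ)) fun i => hτ.ne (by simp)
  obtain hpc | rfl := hpc.lt_or_eq
  swap
  · exact ⟨ρ, none, trivial, pairwise_edge_none τ hρ fun i => hu₁ i i.isLt⟩
  obtain ⟨r, rfl⟩ : ∃ r : Fin c, (r : ℕ) = p := ⟨⟨p, hpc⟩, rfl⟩
  obtain ⟨g, hgc, hv₁, hv₂⟩ :=
    Fin.exists_cut_of_monotone hρ.monotone (t := τ (v ρ r)) fun i => hτ.ne (by simp)
  rcases (hτ.ne (show v ρ r ≠ u ρ by simp)).lt_or_gt with hvu | huv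
  · have hgr : g ≤ r := by
      by_contra! h
      have := hv₁ r h
      have := hu₂ r le_rfl
      omega
    by_cases hM : g = r ∧ (r : ℕ) % 2 = 0
    · exact ⟨ρ, some (r, none), Or.inl hM.2,
        pairwise_edge_mid τ hρ (fun i hi => hv₁ i (by omega)) (fun i hi => hv₂ i (by omega))⟩
    · let m : Fin c := ⟨g - g % 2, by omega⟩
      have hmr : m < r := by simp only [m, Fin.lt_def]; omega
      exact ⟨ρ, some (r, some m), Or.inl ⟨hmr, by simp only [m]; omega⟩,
        pairwise_edge_of_lt τ hρ hmr hu₁ hu₂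
          (fun i hi => hv₁ i (by simp only [m, Fin.lt_def] at hi; omega))
          (fun i hi => hv₂ i (by simp only [m, Fin.lt_def] at hi; omega)) hvu⟩
  · have hrg : r ≤ g := by
      by_contra! h
      have := hu₁ ⟨g, by omega⟩ h
      have := hv₂ ⟨g, by omega⟩ le_rfl
      omega
    by_cases hM : g = r ∧ (c - r) % 2 = 0
    · exact ⟨ρ, some (r, none), Or.inr hM.2,
        pairwise_edge_mid τ hρ (fun i hi => hv₁ i (by omega)) (fun i hi => hv₂ i (by omega))⟩
    · let m : Fin c := ⟨g - (g + c + 1) % 2, by omega⟩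
      have hrm : r ≤ m := by simp only [m, Fin.le_def]; omega
      exact ⟨ρ, some (r, some m), Or.inr ⟨hrm, by simp only [m]; omega⟩,
        pairwise_edge_of_le τ hρ hrm hu₁ hu₂
          (fun i hi => hv₁ i (by simp only [m, Fin.lt_def] at hi; omega))
          (fun i hi => hv₂ i (by simp only [m, Fin.lt_def] at hi; omega)) huv⟩

theorem factorial_mul_one_add_mul_eq (c : ℕ) :
    c ! * (1 + c * ((c + 3) / 2)) = ((c + 1) / 2 + 1) * (c + 1)! - (c + 1) / 2 * c ! := by
  have h : ((c + 1) / 2 + 1) * (c + 1) = 1 + c * ((c + 3) / 2) + (c + 1) / 2 := by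
    rcases Nat.even_or_odd' c with ⟨j, rfl | rfl⟩
    · rw [show (2 * j + 1) / 2 = j by omega, show (2 * j + 3) / 2 = j + 1 by omega]
      ring
    · rw [show (2 * j + 1 + 1) / 2 = j + 1 by omega, show (2 * j + 1 + 3) / 2 = j + 2 by omega]
      ring
  rw [Nat.factorial_succ, ← mul_assoc, h, add_mul, Nat.add_sub_cancel, mul_comm]

theorem exists_oriented_card (c : ℕ) :
    ∃ (n : ℕ) (E : Finset (Fin (c + 1) → Fin n)),
      (∀ e ∈ E, Injective e) ∧
      (∀ e ∈ E, ∀ f ∈ E, Set.range e = Set.range f → e = f) ∧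
      (∀ σ : Fin n → ℕ, Injective σ →
        ∃ e ∈ E, ∀ i j : Fin (c + 1), i < j → σ (e i) < σ (e j)) ∧
      E.card = c ! * (1 + c * ((c + 3) / 2)) := by
  have := exists_oriented_of_lists (c + 1) (univ ×ˢ ({κ | IsValid κ} : Finset (Index c)))
    (fun p => edge p.1 p.2) (fun p => length_edge p.1 p.2) (fun p => nodup_edge p.1 p.2)
    (fun p q h => Prod.ext_iff.mpr (eq_of_mem_edge_iff h)) fun τ hτ => by
      obtain ⟨ρ, κ, hκ, hl⟩ := exists_isValid_pairwise_edge τ hτ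
      exact ⟨(ρ, κ), by simpa using hκ, hl⟩
  rwa [card_product, card_univ, Fintype.card_perm, Fintype.card_fin, card_isValid] at this

end PropertyO

/-- For every integer `k ≥ 3`, there exists an oriented `k`-graph
with Property O having exactly `(⌊k/2⌋ + 1)·k! − ⌊k/2⌋·(k−1)!` edges; that is,
`f(k) ≤ (⌊k/2⌋ + 1)·k! − ⌊k/2⌋·(k−1)!`. -/
theorem stmt_16 (k : ℕ) (hk : 3 ≤ k) :
    ∃ (n : ℕ) (E : Finset (Fin k → Fin n)),
      (∀ e ∈ E, Function.Injective e) ∧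
      (∀ e ∈ E, ∀ f ∈ E, Set.range e = Set.range f → e = f) ∧
      (∀ σ : Fin n → ℕ, Function.Injective σ →
        ∃ e ∈ E, ∀ i j : Fin k, i < j → σ (e i) < σ (e j)) ∧
      E.card = (k / 2 + 1) * Nat.factorial k - (k / 2) * Nat.factorial (k - 1) := by
  obtain ⟨c, rfl⟩ : ∃ c, k = c + 1 := ⟨k - 1, by omega⟩
  rw [Nat.add_sub_cancel, ← PropertyO.factorial_mul_one_add_mul_eq]
  exact PropertyO.exists_oriented_card c
end
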